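/- arXiv:math/0310089 — 9 statements merged into one kernel-verified Lean document; each statement's English description precedes it below -/
import Mathlib

section
/- Let f be holomorphic near 0 ∈ ℂ with f(0)=0 and multiplier a₁ = f'(0) satisfying 0 < |a₁| < 1. Then the sequence φ_k = f^k / a₁^k converges uniformly on a sufficiently small disk around 0 to a holomorphic map φ with φ(0)=0, φ'(0)=1, satisfying φ ∘ f = a₁ · φ. -/
open Metric Filter Topology Asymptotics

/-!
Near `0` we have `‖f z - a z‖ ≤ C ‖z‖²` with `a = f'(0)`, so on a small ball `f` contracts by a
factor `c` slightly larger than `‖a‖`. Writing `w = f^[k] z`, the increment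
`φ_{k+1} z - φ_k z = (f w - a w) / a^(k+1)` is then bounded by `C ε² c^(2k) / ‖a‖^(k+1)`, which is
summable as soon as `c² < ‖a‖`; hence `φ_k` converges uniformly. The limit is holomorphic with
`φ'(0) = 1` as a locally uniform limit of holomorphic maps with derivative `1` at `0`, and
`φ ∘ f = a φ` is the limit of `φ_k ∘ f = a φ_{k+1}`.
-/

theorem AnalyticAt.isBigO_sub_sub_smul_deriv {𝕜 E : Type*} [NontriviallyNormedField 𝕜]
    [NormedAddCommGroup E] [NormedSpace 𝕜 E] {f : 𝕜 → E} {x : 𝕜} (hf : AnalyticAt 𝕜 f x) :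
    (fun z => f (x + z) - f x - z • deriv f x) =O[𝓝 0] fun z => ‖z‖ ^ 2 := by
  obtain ⟨p, hp⟩ := hf
  refine (hp.isBigO_sub_partialSum_pow 2).congr_left fun z => ?_
  simp [FormalMultilinearSeries.partialSum, Finset.sum_range_succ, ← hp.coeff_zero 1, hp.deriv,
    sub_sub]

theorem exists_ball_forall_and_norm_sub_mul_le_sq {𝕜 : Type*} [NormedField 𝕜] {f : 𝕜 → 𝕜}
    {a : 𝕜} {P : 𝕜 → Prop} (hP : ∀ᶠ z in 𝓝 0, P z)
    (hf : (fun z => f z - a * z) =O[𝓝 0] fun z => ‖z‖ ^ 2) {c : ℝ} (hc : ‖a‖ < c) :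
    ∃ C ε, 0 ≤ C ∧ 0 < ε ∧ ‖a‖ + C * ε ≤ c ∧
      ∀ z ∈ ball (0 : 𝕜) ε, P z ∧ ‖f z - a * z‖ ≤ C * ‖z‖ ^ 2 := by
  obtain ⟨C, hC, hCf⟩ := hf.exists_nonneg
  have hnear : ∀ᶠ z in 𝓝 0, P z ∧ ‖f z - a * z‖ ≤ C * ‖z‖ ^ 2 := by
    filter_upwards [hP, hCf.bound] with z hPz hz
    exact ⟨hPz, by simpa using hz⟩
  have hradius : ∀ᶠ ε in 𝓝[>] (0 : ℝ), 0 < ε ∧ C * ε < c - ‖a‖ ∧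
      ∀ z ∈ closedBall (0 : 𝕜) ε, P z ∧ ‖f z - a * z‖ ≤ C * ‖z‖ ^ 2 := by
    refine eventually_mem_nhdsWithin.and (nhdsWithin_le_nhds ?_)
    exact ((continuous_const_mul C).tendsto' 0 0 (mul_zero C)).eventually
      (eventually_lt_nhds (sub_pos.2 hc)) |>.and
      ((tendsto_closedBall_smallSets 0).eventually hnear.smallSets)
  obtain ⟨ε, hε, hCε, hball⟩ := hradius.exists
  exact ⟨C, ε, hC, hε, by linarith, fun z hz => hball z (ball_subset_closedBall hz)⟩

theorem tendstoUniformlyOn_add_tsum_sub {α E : Type*} [NormedAddCommGroup E] [CompleteSpace E]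
    {F : ℕ → α → E} {u : ℕ → ℝ} {s : Set α} (hu : Summable u)
    (hF : ∀ k, ∀ x ∈ s, ‖F (k + 1) x - F k x‖ ≤ u k) :
    TendstoUniformlyOn F (fun x => F 0 x + ∑' k, (F (k + 1) x - F k x)) atTop s := by
  have hconst : TendstoUniformlyOn (fun (_ : ℕ) => F 0) (F 0) atTop s := fun _ hv =>
    .of_forall fun _ _ _ => refl_mem_uniformity hv
  refine (hconst.add (tendstoUniformlyOn_tsum_nat hu hF)).congr ?_
  filter_upwards with k x _
  simp only [Pi.add_apply, Finset.sum_range_sub (fun i => F i x), add_sub_cancel]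

section QuadraticBound

variable {𝕜 : Type*} [NormedField 𝕜] {f : 𝕜 → 𝕜} {a : 𝕜} {C c ε : ℝ}

theorem norm_le_mul_norm_of_norm_sub_mul_le_sq
    (hquad : ∀ z ∈ ball (0 : 𝕜) ε, ‖f z - a * z‖ ≤ C * ‖z‖ ^ 2) (hC : 0 ≤ C)
    (hc : ‖a‖ + C * ε ≤ c) {z : 𝕜} (hz : z ∈ ball 0 ε) : ‖f z‖ ≤ c * ‖z‖ := by
  have hzε : ‖z‖ < ε := mem_ball_zero_iff.1 hz
  calc ‖f z‖ ≤ ‖a * z‖ + ‖f z - a * z‖ := norm_le_norm_add_norm_sub' _ _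
    _ ≤ ‖a‖ * ‖z‖ + C * ‖z‖ ^ 2 := by rw [norm_mul]; gcongr; exact hquad z hz
    _ ≤ (‖a‖ + C * ε) * ‖z‖ := by nlinarith [norm_nonneg z, mul_le_mul_of_nonneg_left hzε.le hC]
    _ ≤ c * ‖z‖ := by gcongr

theorem mapsTo_ball_of_norm_sub_mul_le_sq
    (hquad : ∀ z ∈ ball (0 : 𝕜) ε, ‖f z - a * z‖ ≤ C * ‖z‖ ^ 2) (hC : 0 ≤ C)
    (hc : ‖a‖ + C * ε ≤ c) (hc1 : c ≤ 1) : Set.MapsTo f (ball 0 ε) (ball 0 ε) := by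
  intro z hz
  have hcz := norm_le_mul_norm_of_norm_sub_mul_le_sq hquad hC hc hz
  rw [mem_ball_zero_iff] at hz ⊢
  nlinarith [norm_nonneg z]

theorem norm_iterate_le_of_norm_sub_mul_le_sq
    (hquad : ∀ z ∈ ball (0 : 𝕜) ε, ‖f z - a * z‖ ≤ C * ‖z‖ ^ 2) (hC : 0 ≤ C)
    (hc : ‖a‖ + C * ε ≤ c) (hc1 : c ≤ 1) {z : 𝕜} (hz : z ∈ ball 0 ε) (k : ℕ) :
    ‖f^[k] z‖ ≤ c ^ k * ‖z‖ := by
  have hc0 : 0 ≤ c := by nlinarith [norm_nonneg a, pos_of_mem_ball hz]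
  induction k with
  | zero => simp
  | succ k ih =>
    have hk := mapsTo_ball_of_norm_sub_mul_le_sq hquad hC hc hc1 |>.iterate k hz
    calc ‖f^[k + 1] z‖ = ‖f (f^[k] z)‖ := by rw [Function.iterate_succ_apply']
      _ ≤ c * ‖f^[k] z‖ := norm_le_mul_norm_of_norm_sub_mul_le_sq hquad hC hc hk
      _ ≤ c * (c ^ k * ‖z‖) := by gcongr
      _ = c ^ (k + 1) * ‖z‖ := by ring

theorem norm_iterate_div_pow_succ_sub_le
    (hquad : ∀ z ∈ ball (0 : 𝕜) ε, ‖f z - a * z‖ ≤ C * ‖z‖ ^ 2) (hC : 0 ≤ C)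
    (hc : ‖a‖ + C * ε ≤ c) (hc1 : c ≤ 1) (ha : a ≠ 0) {z : 𝕜} (hz : z ∈ ball 0 ε) (k : ℕ) :
    ‖f^[k + 1] z / a ^ (k + 1) - f^[k] z / a ^ k‖ ≤ C * ε ^ 2 / ‖a‖ * (c ^ 2 / ‖a‖) ^ k := by
  have hc0 : 0 ≤ c := by nlinarith [norm_nonneg a, pos_of_mem_ball hz]
  set w := f^[k] z
  have hw : ‖w‖ ≤ c ^ k * ε :=
    (norm_iterate_le_of_norm_sub_mul_le_sq hquad hC hc hc1 hz k).trans
      (by gcongr; exact (mem_ball_zero_iff.1 hz).le)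
  have hquad_w : ‖f w - a * w‖ ≤ C * (c ^ k * ε) ^ 2 :=
    (hquad w (mapsTo_ball_of_norm_sub_mul_le_sq hquad hC hc hc1 |>.iterate k hz)).trans
      (by gcongr)
  have hdiff : f^[k + 1] z / a ^ (k + 1) - w / a ^ k = (f w - a * w) / a ^ (k + 1) := by
    rw [Function.iterate_succ_apply']
    field_simp
    ring
  rw [hdiff, norm_div, norm_pow, div_le_iff₀ (by positivity)]
  calc ‖f w - a * w‖ ≤ C * (c ^ k * ε) ^ 2 := hquad_w
    _ = C * ε ^ 2 / ‖a‖ * (c ^ 2 / ‖a‖) ^ k * ‖a‖ ^ (k + 1) := by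
      rw [div_pow]
      field_simp
      ring

theorem exists_tendstoUniformlyOn_iterate_div_pow [CompleteSpace 𝕜]
    (hquad : ∀ z ∈ ball (0 : 𝕜) ε, ‖f z - a * z‖ ≤ C * ‖z‖ ^ 2) (hC : 0 ≤ C)
    (hc : ‖a‖ + C * ε ≤ c) (hc1 : c ≤ 1) (hc2 : c ^ 2 < ‖a‖) :
    ∃ φ : 𝕜 → 𝕜, TendstoUniformlyOn (fun k z => f^[k] z / a ^ k) φ atTop (ball 0 ε) := by
  have ha : 0 < ‖a‖ := (sq_nonneg c).trans_lt hc2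
  have hratio : c ^ 2 / ‖a‖ < 1 := (div_lt_one ha).2 hc2
  have hsum := (summable_geometric_of_lt_one (by positivity) hratio).mul_left (C * ε ^ 2 / ‖a‖)
  exact ⟨_, tendstoUniformlyOn_add_tsum_sub hsum fun k z hz =>
    norm_iterate_div_pow_succ_sub_le hquad hC hc hc1 (norm_pos_iff.1 ha) hz k⟩

theorem apply_eq_mul_of_tendsto_iterate_div_pow {φ : 𝕜 → 𝕜} {s : Set 𝕜}
    (hφ : ∀ z ∈ s, Tendsto (fun k => f^[k] z / a ^ k) atTop (𝓝 (φ z)))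
    (hs : Set.MapsTo f s s) (ha : a ≠ 0) {z : 𝕜} (hz : z ∈ s) : φ (f z) = a * φ z := by
  refine tendsto_nhds_unique (hφ _ (hs hz)) ?_
  have hshift := ((hφ z hz).comp (tendsto_add_atTop_nat 1)).const_mul a
  refine hshift.congr fun k => ?_
  simp only [Function.comp_apply, Function.iterate_succ_apply]
  field_simp
  ring

end QuadraticBound

theorem deriv_iterate_div_pow {𝕜 : Type*} [NontriviallyNormedField 𝕜] {f : 𝕜 → 𝕜} {a : 𝕜}
    (hf : HasDerivAt f a 0) (hf0 : f 0 = 0) (ha : a ≠ 0) (k : ℕ) :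
    deriv (fun z => f^[k] z / a ^ k) 0 = 1 := by
  rw [deriv_div_const, (hf.iterate 0 hf0 k).deriv, div_self (pow_ne_zero k ha)]

/-- Kœnigs linearization. If `f` is holomorphic near `0`, `f 0 = 0` and the
multiplier `a₁ = f'(0)` satisfies `0 < |a₁| < 1`, then `φ_k = f^[k] / a₁^k` converges
uniformly on a small disk to a holomorphic `φ` with `φ 0 = 0`, `φ'(0) = 1` and
`φ ∘ f = a₁ • φ` there. -/
theorem koenigs_linearization (f : ℂ → ℂ) (a₁ : ℂ)
    (hf : AnalyticAt ℂ f 0) (hf0 : f 0 = 0) (ha : a₁ = deriv f 0)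
    (h0 : 0 < ‖a₁‖) (h1 : ‖a₁‖ < 1) :
    ∃ ε > (0 : ℝ), ∃ φ : ℂ → ℂ,
      TendstoUniformlyOn (fun k z => f^[k] z / a₁ ^ k) φ atTop (ball (0 : ℂ) ε) ∧
      AnalyticOnNhd ℂ φ (ball (0 : ℂ) ε) ∧
      φ 0 = 0 ∧ deriv φ 0 = 1 ∧
      ∀ z ∈ ball (0 : ℂ) ε, φ (f z) = a₁ * φ z := by
  subst ha
  have ha0 : deriv f 0 ≠ 0 := norm_pos_iff.1 h0
  -- `c > ‖f' 0‖` makes `f` contract near `0`; `c² < ‖f' 0‖` makes the increments summable.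
  obtain ⟨c, hac, hc⟩ := exists_between (Real.lt_sqrt_self_iff.2 ⟨h0.ne', h1⟩)
  have hc2 : c ^ 2 < ‖deriv f 0‖ := (Real.lt_sqrt (h0.le.trans hac.le)).1 hc
  have hc1 : c ≤ 1 := hc.le.trans (Real.sqrt_le_one.2 h1.le)
  have hquad : (fun z => f z - deriv f 0 * z) =O[𝓝 0] fun z => ‖z‖ ^ 2 := by
    simpa [hf0, mul_comm] using hf.isBigO_sub_sub_smul_deriv
  obtain ⟨C, ε, hC, hε, hCε, hball⟩ :=
    exists_ball_forall_and_norm_sub_mul_le_sq hf.eventually_analyticAt hquad hac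
  have hquad_ball z (hz : z ∈ ball (0 : ℂ) ε) := (hball z hz).2
  have hmaps := mapsTo_ball_of_norm_sub_mul_le_sq hquad_ball hC hCε hc1
  obtain ⟨φ, hφ⟩ := exists_tendstoUniformlyOn_iterate_div_pow hquad_ball hC hCε hc1 hc2
  have hfd : DifferentiableOn ℂ f (ball 0 ε) := fun z hz => (hball z hz).1.differentiableWithinAt
  have hdiff (k : ℕ) : DifferentiableOn ℂ (fun z => f^[k] z / deriv f 0 ^ k) (ball 0 ε) :=
    (hfd.iterate hmaps k).div_const _
  have hlim := hφ.tendstoLocallyUniformlyOn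
  have h0ε : (0 : ℂ) ∈ ball 0 ε := mem_ball_self hε
  refine ⟨ε, hε, φ, hφ, ?_, ?_, ?_, fun z hz => ?_⟩
  · exact (hlim.differentiableOn (.of_forall hdiff) isOpen_ball).analyticOnNhd isOpen_ball
  · refine tendsto_nhds_unique (hφ.tendsto_at h0ε) ?_
    simp [Function.iterate_fixed hf0]
  · refine tendsto_nhds_unique ((hlim.deriv (.of_forall hdiff) isOpen_ball).tendsto_at h0ε) ?_
    simp [deriv_iterate_div_pow hf.differentiableAt.hasDerivAt hf0 ha0]
  · exact apply_eq_mul_of_tendsto_iterate_div_pow (fun z hz => hφ.tendsto_at hz) hmaps ha0 hz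
end

section
/- Let f(z) = λz + a₂z² + ⋯ be holomorphic near 0 with λ = e^{2πip/q} a primitive q-th root of unity. If f is topologically locally conjugated to the rotation z ↦ λz, then f^q = id on a neighbourhood of 0. -/
open Filter

/-- a parabolic germ topologically conjugated to its linear part has
finite order: if `f` is holomorphic near `0`, `f 0 = 0`, `f'(0) = λ` is a primitive
`q`-th root of unity, and `f` is topologically locally conjugated to `z ↦ λ z`,
then `f^[q] = id` near `0`. -/
theorem parabolic_top_linearizable_finite_order (f : ℂ → ℂ) (lam : ℂ) (q : ℕ)
    (hf : AnalyticAt ℂ f 0) (hf0 : f 0 = 0) (hder : deriv f 0 = lam)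
    (hq : 0 < q) (hprim : IsPrimitiveRoot lam q)
    (hconj : ∃ (W₁ W₂ : Set ℂ) (_ : IsOpen W₁) (_ : IsOpen W₂)
        (h0₁ : (0 : ℂ) ∈ W₁) (_ : (0 : ℂ) ∈ W₂) (φ : W₁ ≃ₜ W₂),
        (φ ⟨0, h0₁⟩ : ℂ) = 0 ∧
        ∀ (z : W₁) (hz : f (z : ℂ) ∈ W₁),
          (φ ⟨f (z : ℂ), hz⟩ : ℂ) = lam * (φ z : ℂ)) :
    ∀ᶠ z in nhds (0 : ℂ), f^[q] z = z := by
  obtain ⟨W₁, W₂, hW₁, hW₂, h0₁, h0₂, φ, hφ0, hφ⟩ := hconj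
  have hfc : ContinuousAt f 0 := hf.continuousAt
  have hit0 : ∀ k, f^[k] 0 = 0 := fun k => Function.iterate_fixed hf0 k
  have hitc : ∀ k, ContinuousAt (f^[k]) 0 := by
    intro k
    induction k with
    | zero => exact continuousAt_id
    | succ k ih =>
      rw [Function.iterate_succ']
      exact ContinuousAt.comp (by rw [hit0 k]; exact hfc) ih
  have hmemk : ∀ k, ∀ᶠ z in nhds (0 : ℂ), f^[k] z ∈ W₁ := by
    intro k
    have h : Filter.Tendsto (f^[k]) (nhds 0) (nhds 0) := by
      have := hitc k
      rwa [ContinuousAt, hit0 k] at this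
    exact h.eventually (eventually_of_mem (hW₁.mem_nhds h0₁) fun x hx => hx)
  have hmem : ∀ᶠ z in nhds (0 : ℂ), ∀ j ∈ Finset.range (q + 1), f^[j] z ∈ W₁ :=
    (Finset.range (q + 1)).eventually_all.mpr fun j _ => hmemk j
  filter_upwards [hmem] with z hz
  have hz0 : z ∈ W₁ := by simpa using hz 0 (by simp [Nat.succ_pos])
  have key : ∀ k, k ≤ q → ∀ h : f^[k] z ∈ W₁,
      (φ ⟨f^[k] z, h⟩ : ℂ) = lam ^ k * (φ ⟨z, hz0⟩ : ℂ) := by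
    intro k
    induction k with
    | zero =>
      intro _ h
      have : (⟨f^[0] z, h⟩ : W₁) = ⟨z, hz0⟩ := Subtype.ext (by simp)
      rw [this, pow_zero, one_mul]
    | succ k ih =>
      intro hk h
      have hkq : k ≤ q := Nat.le_of_succ_le hk
      have hmk : f^[k] z ∈ W₁ := hz k (Finset.mem_range.mpr (Nat.lt_succ_of_le hkq))
      have hs : f^[k + 1] z = f (f^[k] z) := Function.iterate_succ_apply' f k z
      have h' : f (f^[k] z) ∈ W₁ := hs ▸ h
      have heq : (⟨f^[k + 1] z, h⟩ : W₁) = ⟨f (f^[k] z), h'⟩ := Subtype.ext hs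
      rw [heq, hφ ⟨f^[k] z, hmk⟩ h', ih hkq hmk, pow_succ, mul_comm (lam ^ k) lam,
        mul_assoc]
  have hmq : f^[q] z ∈ W₁ := hz q (Finset.mem_range.mpr (Nat.lt_succ_self q))
  have hval : (φ ⟨f^[q] z, hmq⟩ : ℂ) = (φ ⟨z, hz0⟩ : ℂ) := by
    rw [key q le_rfl hmq, hprim.pow_eq_one, one_mul]
  have : (⟨f^[q] z, hmq⟩ : W₁) = ⟨z, hz0⟩ := φ.injective (Subtype.ext hval)
  exact congrArg Subtype.val this
end

section
/- Let f(z) = z(1 + a z^r) with a ≠ 0, r ≥ 1, and let v ∈ ℂ with |v|=1 and a v^r real and negative. Then the segment { cv : 0 ≤ c ≤ |a|^{-1/r} } is f-invariant and for every point z = cv with 0 < c < |a|^{-1/r} the iterates f^k(z) stay on the segment and converge to 0. -/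
open Filter

/-- for `f z = z(1 + a z^r)` with `a ≠ 0`, `r ≥ 1`, and `v` a unit vector
with `a v^r` real and negative, the segment `{ c v : 0 ≤ c ≤ |a|^{-1/r} }` is
`f`-invariant and the orbit of every interior point of the segment stays on it and
converges to `0`. -/
theorem attracting_direction_segment (a v : ℂ) (r : ℕ) (f : ℂ → ℂ)
    (hf : ∀ z, f z = z * (1 + a * z ^ r))
    (ha : a ≠ 0) (hr : 1 ≤ r) (hv : ‖v‖ = 1)
    (hre : (a * v ^ r).re < 0) (him : (a * v ^ r).im = 0) :
    Set.MapsTo f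
        {z : ℂ | ∃ c : ℝ, 0 ≤ c ∧ c ≤ ‖a‖ ^ (-(1 : ℝ) / r) ∧ z = (c : ℂ) * v}
        {z : ℂ | ∃ c : ℝ, 0 ≤ c ∧ c ≤ ‖a‖ ^ (-(1 : ℝ) / r) ∧ z = (c : ℂ) * v} ∧
    ∀ c : ℝ, 0 < c → c < ‖a‖ ^ (-(1 : ℝ) / r) →
      (∀ k : ℕ, f^[k] ((c : ℂ) * v) ∈
        {z : ℂ | ∃ c' : ℝ, 0 ≤ c' ∧ c' ≤ ‖a‖ ^ (-(1 : ℝ) / r) ∧ z = (c' : ℂ) * v}) ∧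
      Tendsto (fun k => f^[k] ((c : ℂ) * v)) atTop (nhds 0) := by
  set A : ℝ := ‖a‖ with hA
  have hApos : 0 < A := norm_pos_iff.mpr ha
  set M : ℝ := A ^ (-(1 : ℝ) / r) with hM
  have hrR : (r : ℝ) ≠ 0 := by positivity
  have hMpos : 0 < M := Real.rpow_pos_of_pos hApos _
  have hMr : M ^ r = A⁻¹ := by
    rw [hM, ← Real.rpow_natCast (A ^ (-(1 : ℝ) / r)) r, ← Real.rpow_mul hApos.le]
    rw [show (-(1 : ℝ) / r) * r = -1 by field_simp]
    simp [Real.rpow_neg_one]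
  -- a * v ^ r = -A
  have hzre : a * v ^ r = (((a * v ^ r).re : ℝ) : ℂ) := by
    apply Complex.ext <;> simp [him]
  have hnorm : ‖a * v ^ r‖ = A := by
    rw [norm_mul, norm_pow, hv, one_pow, mul_one]
  have hkey : a * v ^ r = (-(A : ℝ) : ℂ) := by
    rw [hzre]
    norm_cast
    rw [hzre, Complex.norm_real, Real.norm_eq_abs, abs_of_neg hre] at hnorm
    linarith
  -- the real one-dimensional map
  set g : ℝ → ℝ := fun c => c * (1 - A * c ^ r) with hg
  have hfg : ∀ c : ℝ, f ((c : ℂ) * v) = ((g c : ℝ) : ℂ) * v := by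
    intro c
    rw [hf]
    have : ((c : ℂ) * v) ^ r = (c : ℂ) ^ r * v ^ r := by ring
    rw [this]
    have : a * ((c : ℂ) ^ r * v ^ r) = (c : ℂ) ^ r * (a * v ^ r) := by ring
    rw [this, hkey, hg]
    push_cast
    ring
  -- g maps [0, M] into itself, decreasing
  have hgmem : ∀ c : ℝ, 0 ≤ c → c ≤ M → 0 ≤ g c ∧ g c ≤ c := by
    intro c hc0 hcM
    have hcr : A * c ^ r ≤ 1 := by
      have : c ^ r ≤ M ^ r := pow_le_pow_left₀ hc0 hcM r
      rw [hMr] at this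
      calc A * c ^ r ≤ A * A⁻¹ := by nlinarith
        _ = 1 := mul_inv_cancel₀ hApos.ne'
    constructor
    · apply mul_nonneg hc0; linarith
    · simp only [hg]
      nlinarith [mul_nonneg hc0 (mul_nonneg hApos.le (pow_nonneg hc0 r))]
  refine ⟨?_, ?_⟩
  · rintro z ⟨c, hc0, hcM, rfl⟩
    obtain ⟨h1, h2⟩ := hgmem c hc0 hcM
    exact ⟨g c, h1, le_trans h2 hcM, hfg c⟩
  · intro c hc0 hcM
    -- orbit in real coordinates
    have horb : ∀ k : ℕ, f^[k] ((c : ℂ) * v) = ((g^[k] c : ℝ) : ℂ) * v := by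
      intro k
      induction k with
      | zero => simp
      | succ n ih =>
        rw [Function.iterate_succ_apply', Function.iterate_succ_apply', ih, hfg]
    set u : ℕ → ℝ := fun k => g^[k] c with hu
    have hubd : ∀ k, 0 ≤ u k ∧ u k ≤ M := by
      intro k
      induction k with
      | zero => exact ⟨hc0.le, hcM.le⟩
      | succ n ih =>
        obtain ⟨h1, h2⟩ := hgmem (u n) ih.1 ih.2
        have : u (n + 1) = g (u n) := Function.iterate_succ_apply' g n c
        rw [this]
        exact ⟨h1, le_trans h2 ih.2⟩
    have hanti : Antitone u := by
      apply antitone_nat_of_succ_le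
      intro n
      have : u (n + 1) = g (u n) := Function.iterate_succ_apply' g n c
      rw [this]
      exact (hgmem (u n) (hubd n).1 (hubd n).2).2
    have hbdd : BddBelow (Set.range u) := by
      refine ⟨0, ?_⟩
      rintro x ⟨k, rfl⟩
      exact (hubd k).1
    have hconv : Tendsto u atTop (nhds (⨅ k, u k)) :=
      tendsto_atTop_ciInf hanti hbdd
    set L : ℝ := ⨅ k, u k with hL
    have hL0 : 0 ≤ L := le_ciInf fun k => (hubd k).1
    -- L is a fixed point of g
    have hgL : g L = L := by
      have h1 : Tendsto (fun n => u (n + 1)) atTop (nhds L) :=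
        hconv.comp (tendsto_add_atTop_nat 1)
      have h2 : Tendsto (fun n => g (u n)) atTop (nhds (g L)) := by
        have hcont : Continuous g := by
          rw [hg]
          exact continuous_id.mul (continuous_const.sub (continuous_const.mul (continuous_pow r)))
        exact (hcont.tendsto L).comp hconv
      have : (fun n => u (n + 1)) = fun n => g (u n) := by
        funext n
        exact Function.iterate_succ_apply' g n c
      rw [this] at h1
      exact tendsto_nhds_unique h2 h1
    have hLz : L = 0 := by
      have : L * (1 - A * L ^ r) = L := hgL
      have h2 : A * L ^ (r + 1) = 0 := by linear_combination -this
      have h3 : L ^ (r + 1) = 0 := by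
        rcases mul_eq_zero.mp h2 with h | h
        · exact absurd h hApos.ne'
        · exact h
      exact pow_eq_zero_iff (Nat.succ_ne_zero r) |>.mp h3
    rw [hLz] at hconv
    refine ⟨fun k => ⟨u k, (hubd k).1, (hubd k).2.trans le_rfl, horb k⟩, ?_⟩
    have : Tendsto (fun k => ((u k : ℝ) : ℂ) * v) atTop (nhds (((0 : ℝ) : ℂ) * v)) := by
      exact ((Complex.continuous_ofReal.tendsto 0).comp hconv).mul_const v
    simp only [Complex.ofReal_zero, zero_mul] at this
    exact this.congr fun k => (horb k).symm
end

section
/- Let P_δ = { z ∈ ℂ : |z^r − δ| < δ } for δ > 0 and r ≥ 1, let P be a connected component of P_δ, and define ψ(z) = 1/(r z^r) on P. Then ψ is a biholomorphism of P onto the right half-plane H_δ = { w ∈ ℂ : Re w > 1/(2rδ) }. -/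
/-!
The disc `D = {u : |u - δ| < δ}` lies in the slit plane, and `u ↦ 1/(r u)` maps it onto the
half-plane `Re w > 1/(2rδ)`. On the slit plane the principal branch `u ↦ u ^ (1/r)` is
holomorphic, so `z ↦ z / (z^r)^(1/r)` is continuous on `{z : z^r ∈ D}` with values in the finite
set of `r`-th roots of unity; it is therefore constant on each connected component, and the
component through `z₀` is exactly `ζ · D^(1/r)` with `ζ = z₀ / (z₀^r)^(1/r)`. On it, `ψ` is
`ζ u^(1/r) ↦ 1/(r u)`, whose holomorphic inverse is `w ↦ ζ (1/(r w))^(1/r)`.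
-/

open Complex Metric Set

lemma ball_ofReal_self_subset_slitPlane (δ : ℝ) : ball (δ : ℂ) δ ⊆ slitPlane := by
  intro u hu
  have h := (re_le_norm ((δ : ℂ) - u)).trans_lt (mem_ball_iff_norm'.1 hu)
  simp only [sub_re, ofReal_re] at h
  exact Or.inl (by linarith)

lemma mem_ball_self_iff_lt_re_inv {δ : ℝ} (hδ : 0 < δ) (u : ℂ) :
    u ∈ ball (δ : ℂ) δ ↔ 1 / (2 * δ) < (u⁻¹).re := by
  rcases eq_or_ne u 0 with rfl | hu
  · simp [abs_of_pos hδ, hδ.le]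
  have hns : 0 < normSq u := normSq_pos.mpr hu
  rw [inv_re, lt_div_iff₀ hns, mem_ball_iff_norm,
    ← pow_lt_pow_iff_left₀ (norm_nonneg _) hδ.le two_ne_zero, Complex.sq_norm, normSq_apply,
    normSq_apply]
  simp only [sub_re, sub_im, ofReal_re, ofReal_im, sub_zero]
  rw [div_mul_eq_mul_div, one_mul, div_lt_iff₀ (by positivity)]
  constructor <;> intro h <;> nlinarith

lemma mem_ball_self_iff_lt_re_one_div_natCast_mul {r : ℕ} (hr : r ≠ 0) {δ : ℝ} (hδ : 0 < δ)
    (u : ℂ) :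
    u ∈ ball (δ : ℂ) δ ↔ 1 / (2 * r * δ) < (1 / ((r : ℂ) * u)).re := by
  have hr' : (0 : ℝ) < r := by positivity
  have hre : (1 / ((r : ℂ) * u)).re = (u⁻¹).re / r := by
    rw [one_div, mul_inv, ← ofReal_natCast, ← ofReal_inv, re_ofReal_mul, inv_mul_eq_div]
  rw [mem_ball_self_iff_lt_re_inv hδ, hre, lt_div_iff₀ hr',
    show 1 / (2 * r * δ) * r = 1 / (2 * δ) by field_simp]

lemma one_div_mul_one_div_mul_cancel {K : Type*} [Field K] {c : K} (hc : c ≠ 0) (w : K) :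
    1 / (c * (1 / (c * w))) = w := by
  rw [one_div, one_div, mul_inv, inv_inv, ← mul_assoc, inv_mul_cancel₀ hc, one_mul]

lemma mul_cpow_nat_inv_pow {r : ℕ} (hr : r ≠ 0) {ζ : ℂ} (hζ : ζ ^ r = 1) (u : ℂ) :
    (ζ * u ^ (r⁻¹ : ℂ)) ^ r = u := by
  rw [mul_pow, hζ, one_mul, cpow_nat_inv_pow u hr]

lemma div_cpow_nat_inv_pow {r : ℕ} (hr : r ≠ 0) {z : ℂ} (hz : z ^ r ≠ 0) :
    (z / (z ^ r) ^ (r⁻¹ : ℂ)) ^ r = 1 := by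
  rw [div_pow, cpow_nat_inv_pow _ hr, div_self hz]

theorem connectedComponentIn_preimage_pow {r : ℕ} (hr : r ≠ 0) {D : Set ℂ}
    (hDs : D ⊆ slitPlane) (hD : IsPreconnected D) {z₀ : ℂ} (hz₀ : z₀ ^ r ∈ D) :
    connectedComponentIn ((· ^ r) ⁻¹' D) z₀ =
      (z₀ / (z₀ ^ r) ^ (r⁻¹ : ℂ) * · ^ (r⁻¹ : ℂ)) '' D := by
  set ζ := z₀ / (z₀ ^ r) ^ (r⁻¹ : ℂ)
  have hr' : (r⁻¹ : ℂ) ≠ 0 := inv_ne_zero (by exact_mod_cast hr)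
  have hroot_ne : ∀ z ∈ (· ^ r) ⁻¹' D, (z ^ r) ^ (r⁻¹ : ℂ) ≠ 0 := fun z hz =>
    (cpow_ne_zero_iff_of_exponent_ne_zero hr').2 (slitPlane_ne_zero (hDs hz))
  apply Subset.antisymm
  · have hcont : ContinuousOn (fun z : ℂ => z / (z ^ r) ^ (r⁻¹ : ℂ)) ((· ^ r) ⁻¹' D) :=
      continuousOn_id.div ((continuousOn_pow r).cpow_const fun z hz => hDs hz) hroot_ne
    have hroots : MapsTo (fun z : ℂ => z / (z ^ r) ^ (r⁻¹ : ℂ)) ((· ^ r) ⁻¹' D)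
        (Polynomial.nthRootsFinset r (1 : ℂ)) := fun z hz => by
      simpa [Nat.pos_of_ne_zero hr] using div_cpow_nat_inv_pow hr (slitPlane_ne_zero (hDs hz))
    intro z hz
    have hzU := connectedComponentIn_subset _ _ hz
    have hconst : z / (z ^ r) ^ (r⁻¹ : ℂ) = ζ :=
      isPreconnected_connectedComponentIn.constant_of_mapsTo (Finset.finite_toSet _).isDiscrete
        (hcont.mono (connectedComponentIn_subset _ _)) (hroots.mono_left
        (connectedComponentIn_subset _ _)) hz (mem_connectedComponentIn hz₀)
    exact ⟨z ^ r, hzU, by beta_reduce; rw [← hconst, div_mul_cancel₀ _ (hroot_ne z hzU)]⟩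
  · have hζ : ζ ^ r = 1 := div_cpow_nat_inv_pow hr (slitPlane_ne_zero (hDs hz₀))
    refine (hD.image _ (continuousOn_const.mul (continuousOn_id.cpow_const hDs))
      ).subset_connectedComponentIn ⟨z₀ ^ r, hz₀, div_mul_cancel₀ _ (hroot_ne z₀ hz₀)⟩ ?_
    rintro _ ⟨u, hu, rfl⟩
    show (ζ * u ^ (r⁻¹ : ℂ)) ^ r ∈ D
    rwa [mul_cpow_nat_inv_pow hr hζ]

noncomputable def petal (r : ℕ) (δ : ℝ) (ζ : ℂ) : Set ℂ := (ζ * · ^ (r⁻¹ : ℂ)) '' ball (δ : ℂ) δ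

noncomputable def petalMap (r : ℕ) (z : ℂ) : ℂ := 1 / ((r : ℂ) * z ^ r)

noncomputable def petalInv (r : ℕ) (ζ w : ℂ) : ℂ := ζ * (1 / ((r : ℂ) * w)) ^ (r⁻¹ : ℂ)

theorem connectedComponentIn_eq_petal {r : ℕ} (hr : r ≠ 0) {δ : ℝ} {z₀ : ℂ}
    (hz₀ : z₀ ^ r ∈ ball (δ : ℂ) δ) :
    connectedComponentIn {z : ℂ | ‖z ^ r - (δ : ℂ)‖ < δ} z₀ =
      petal r δ (z₀ / (z₀ ^ r) ^ (r⁻¹ : ℂ)) := by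
  have hU : {z : ℂ | ‖z ^ r - (δ : ℂ)‖ < δ} = (· ^ r) ⁻¹' ball (δ : ℂ) δ := by
    ext z; simp [dist_eq_norm]
  rw [hU, connectedComponentIn_preimage_pow hr (ball_ofReal_self_subset_slitPlane δ)
    (convex_ball _ _).isPreconnected hz₀, petal]

lemma petalMap_mul_cpow_nat_inv {r : ℕ} (hr : r ≠ 0) {ζ : ℂ} (hζ : ζ ^ r = 1) (u : ℂ) :
    petalMap r (ζ * u ^ (r⁻¹ : ℂ)) = 1 / (r * u) := by
  rw [petalMap, mul_cpow_nat_inv_pow hr hζ]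

lemma petalMap_petalInv {r : ℕ} (hr : r ≠ 0) {ζ : ℂ} (hζ : ζ ^ r = 1) (w : ℂ) :
    petalMap r (petalInv r ζ w) = w := by
  rw [petalInv, petalMap_mul_cpow_nat_inv hr hζ, one_div_mul_one_div_mul_cancel (by simpa)]

lemma leftInvOn_petalInv {r : ℕ} (hr : r ≠ 0) {ζ : ℂ} (hζ : ζ ^ r = 1) (δ : ℝ) :
    LeftInvOn (petalInv r ζ) (petalMap r) (petal r δ ζ) := by
  rintro _ ⟨u, -, rfl⟩
  rw [petalMap_mul_cpow_nat_inv hr hζ, petalInv, one_div_mul_one_div_mul_cancel (by simpa)]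

lemma one_div_natCast_mul_mem_ball {r : ℕ} (hr : r ≠ 0) {δ : ℝ} (hδ : 0 < δ) {w : ℂ}
    (hw : 1 / (2 * r * δ) < w.re) : 1 / ((r : ℂ) * w) ∈ ball (δ : ℂ) δ := by
  rwa [mem_ball_self_iff_lt_re_one_div_natCast_mul hr hδ,
    one_div_mul_one_div_mul_cancel (by simpa)]

theorem bijOn_petalMap {r : ℕ} (hr : r ≠ 0) {δ : ℝ} (hδ : 0 < δ) {ζ : ℂ} (hζ : ζ ^ r = 1) :
    BijOn (petalMap r) (petal r δ ζ) {w : ℂ | 1 / (2 * r * δ) < w.re} := by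
  refine InvOn.bijOn ⟨leftInvOn_petalInv hr hζ δ, fun w _ => petalMap_petalInv hr hζ w⟩ ?_
    fun w hw => ⟨_, one_div_natCast_mul_mem_ball hr hδ hw, rfl⟩
  rintro _ ⟨u, hu, rfl⟩
  rw [petalMap_mul_cpow_nat_inv hr hζ]
  exact (mem_ball_self_iff_lt_re_one_div_natCast_mul hr hδ u).1 hu

lemma differentiableOn_petalMap {r : ℕ} (hr : r ≠ 0) {ζ : ℂ} (hζ : ζ ^ r = 1) (δ : ℝ) :
    DifferentiableOn ℂ (petalMap r) (petal r δ ζ) := by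
  rintro _ ⟨u, hu, rfl⟩
  have hu0 : (ζ * u ^ (r⁻¹ : ℂ)) ^ r ≠ 0 := by
    rw [mul_cpow_nat_inv_pow hr hζ]
    exact slitPlane_ne_zero (ball_ofReal_self_subset_slitPlane δ hu)
  have hd : DifferentiableAt ℂ (fun z : ℂ => 1 / ((r : ℂ) * z ^ r)) (ζ * u ^ (r⁻¹ : ℂ)) :=
    DifferentiableAt.div (by fun_prop) (by fun_prop) (mul_ne_zero (by exact_mod_cast hr) hu0)
  exact hd.differentiableWithinAt

lemma differentiableOn_petalInv {r : ℕ} (hr : r ≠ 0) {δ : ℝ} (hδ : 0 < δ) (ζ : ℂ) :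
    DifferentiableOn ℂ (petalInv r ζ) {w : ℂ | 1 / (2 * r * δ) < w.re} := by
  intro w hw
  have hslit := ball_ofReal_self_subset_slitPlane δ (one_div_natCast_mul_mem_ball hr hδ hw)
  have hw0 : (r : ℂ) * w ≠ 0 := fun h => zero_notMem_slitPlane (by rwa [h, div_zero] at hslit)
  exact (((DifferentiableAt.div (by fun_prop) (by fun_prop) hw0).cpow_const hslit).const_mul
    ζ).differentiableWithinAt

/-- let `P_δ = {z : |z^r − δ| < δ}` with `δ > 0`, `r ≥ 1`, let `P` be a
connected component of `P_δ`, and `ψ z = 1/(r z^r)`. Then `ψ` is a biholomorphism of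
`P` onto the right half-plane `H_δ = {w : Re w > 1/(2rδ)}`. -/
theorem petal_biholomorphism (r : ℕ) (δ : ℝ) (hr : 1 ≤ r) (hδ : 0 < δ)
    (P : Set ℂ) (z₀ : ℂ) (hz₀ : z₀ ∈ {z : ℂ | ‖z ^ r - (δ : ℂ)‖ < δ})
    (hP : P = connectedComponentIn {z : ℂ | ‖z ^ r - (δ : ℂ)‖ < δ} z₀) :
    DifferentiableOn ℂ (fun z : ℂ => 1 / ((r : ℂ) * z ^ r)) P ∧
    Set.BijOn (fun z : ℂ => 1 / ((r : ℂ) * z ^ r)) P {w : ℂ | 1 / (2 * r * δ) < w.re} ∧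
    ∃ g : ℂ → ℂ, DifferentiableOn ℂ g {w : ℂ | 1 / (2 * r * δ) < w.re} ∧
      ∀ z ∈ P, g (1 / ((r : ℂ) * z ^ r)) = z := by
  have hr0 : r ≠ 0 := by omega
  have hz₀' : z₀ ^ r ∈ ball (δ : ℂ) δ := by simpa [dist_eq_norm] using hz₀
  have hζ : (z₀ / (z₀ ^ r) ^ (r⁻¹ : ℂ)) ^ r = 1 :=
    div_cpow_nat_inv_pow hr0 (slitPlane_ne_zero (ball_ofReal_self_subset_slitPlane δ hz₀'))
  rw [connectedComponentIn_eq_petal hr0 hz₀'] at hP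
  subst hP
  exact ⟨differentiableOn_petalMap hr0 hζ δ, bijOn_petalMap hr0 hδ hζ, petalInv r _,
    differentiableOn_petalInv hr0 hδ _, leftInvOn_petalInv hr0 hζ δ⟩
end

section
/- Let f(z) = z + a_{r+1}z^{r+1} + ⋯ be holomorphic near 0 and tangent to the identity with a_{r+1} ≠ 0. Then the index β = (1/2πi) ∮_γ dz/(z − f(z)), taken over a small positive loop γ around 0, is invariant under holomorphic local conjugation: if g = φ⁻¹ ∘ f ∘ φ with φ a local biholomorphism fixing 0, then g has the same index as f. -/
/-!
If `φ (g z) = f (φ z)`, then `(z - g z)⁻¹` and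
`φ' z * (φ z - f (φ z))⁻¹ = φ' z * (φ z - φ (g z))⁻¹` differ by a function that is bounded near
`0`: by a second-order Taylor estimate for `φ`, the kernel `(z - y)⁻¹ - φ' z * (φ z - φ y)⁻¹` is
bounded near the diagonal. By the removable singularity theorem their integrals over small circles
agree.

Write `(w - f w)⁻¹ = V w / w ^ (n + 1)` with `V` holomorphic. The integral of
`φ' z * V (φ z) / φ z ^ (n + 1)` is computed by peeling off `V w = V 0 + w * dslope V 0 w`: the
terms `φ' * φ ^ k` with `k ≤ -2` have primitives, and `φ' / φ` integrates to `2πi` since `φ` has a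
simple zero. The value, `2πi` times the `n`-th Taylor coefficient of `V`, does not depend on `φ`;
taking `φ = id` gives the index of `f`.
-/

open Filter Complex Function Asymptotics Metric Set
open scoped Real Topology

theorem AnalyticAt.isBigO_sub_sub_mul_deriv {φ : ℂ → ℂ} {x : ℂ} (hφ : AnalyticAt ℂ φ x) :
    (fun p : ℂ × ℂ => φ p.1 - φ p.2 - (p.1 - p.2) * deriv φ p.1) =O[𝓝 (x, x)]
      fun p => (p.1 - p.2) ^ 2 := by
  obtain ⟨K, t, ht, hlip⟩ := hφ.deriv.hasStrictDerivAt.hasStrictFDerivAt.exists_lipschitzOnWith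
  obtain ⟨δ, hδ, hball⟩ := Metric.eventually_nhds_iff_ball.1
    ((show ∀ᶠ ξ in 𝓝 x, ξ ∈ t from ht).and hφ.eventually_analyticAt)
  refine IsBigO.of_bound K ?_
  filter_upwards [prod_mem_nhds (ball_mem_nhds x hδ) (ball_mem_nhds x hδ)] with p hp
  obtain ⟨z, y⟩ := p
  have hseg : segment ℝ z y ⊆ ball x δ := (convex_ball x δ).segment_subset hp.1 hp.2
  have hψ : ∀ ξ ∈ segment ℝ z y,
      HasDerivAt (fun ξ => φ ξ - ξ * deriv φ z) (deriv φ ξ - deriv φ z) ξ := fun ξ hξ => by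
    simpa using (hball ξ (hseg hξ)).2.differentiableAt.hasDerivAt.fun_sub
      ((hasDerivAt_id ξ).mul_const (deriv φ z))
  have hbound : ∀ ξ ∈ segment ℝ z y, ‖deriv φ ξ - deriv φ z‖ ≤ K * ‖y - z‖ := fun ξ hξ =>
    calc ‖deriv φ ξ - deriv φ z‖ ≤ K * ‖ξ - z‖ := by
          simpa only [dist_eq_norm] using
            hlip.dist_le_mul ξ (hball ξ (hseg hξ)).1 z (hball z hp.1).1
      _ ≤ K * ‖y - z‖ := by gcongr; exact norm_sub_le_of_mem_segment hξ
  have := (convex_segment z y).norm_image_sub_le_of_norm_hasDerivWithin_le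
    (fun ξ hξ => (hψ ξ hξ).hasDerivWithinAt) hbound (left_mem_segment ℝ z y)
    (right_mem_segment ℝ z y)
  calc ‖φ z - φ y - (z - y) * deriv φ z‖
      = ‖(φ y - y * deriv φ z) - (φ z - z * deriv φ z)‖ := by rw [← norm_neg]; ring_nf
    _ ≤ K * ‖y - z‖ * ‖y - z‖ := this
    _ = K * ‖(z - y) ^ 2‖ := by rw [norm_pow, norm_sub_rev]; ring

theorem AnalyticAt.isBigO_inv_sub_sub_deriv_mul_inv_sub {φ : ℂ → ℂ} {x : ℂ}
    (hφ : AnalyticAt ℂ φ x) (hφ' : deriv φ x ≠ 0) :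
    (fun p : ℂ × ℂ => (p.1 - p.2)⁻¹ - deriv φ p.1 * (φ p.1 - φ p.2)⁻¹) =O[𝓝 (x, x)]
      fun _ => (1 : ℂ) := by
  obtain ⟨C, hC0, hC⟩ := hφ.isBigO_sub_sub_mul_deriv.exists_nonneg
  obtain ⟨C', hC'0, hC'⟩ := (hφ.hasStrictDerivAt.isTheta_sub hφ').isBigO_symm.exists_nonneg
  refine IsBigO.of_bound (C * C') ?_
  filter_upwards [hC.bound, hC'.bound] with ⟨z, y⟩ hN hΔ
  dsimp only at hN hΔ ⊢
  rw [norm_one, mul_one]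
  rcases eq_or_ne (z - y) 0 with h | h
  · simp only [sub_eq_zero.1 h, sub_self, inv_zero, mul_zero, norm_zero]
    positivity
  have hΦ : φ z - φ y ≠ 0 := fun h0 => h (norm_le_zero_iff.1 (by simpa [h0] using hΔ))
  have hkernel : (z - y)⁻¹ - deriv φ z * (φ z - φ y)⁻¹
      = (φ z - φ y - (z - y) * deriv φ z) / ((z - y) * (φ z - φ y)) := by
    field_simp
  rw [hkernel, norm_div, norm_mul, div_le_iff₀ (by positivity)]
  rw [norm_pow] at hN
  calc ‖φ z - φ y - (z - y) * deriv φ z‖ ≤ C * (‖z - y‖ * ‖z - y‖) := by linarith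
    _ ≤ C * (‖z - y‖ * (C' * ‖φ z - φ y‖)) := by gcongr
    _ = C * C' * (‖z - y‖ * ‖φ z - φ y‖) := by ring

section CircleIntegral

variable {E : Type*} [NormedAddCommGroup E] {c : ℂ}

theorem eventually_nhdsGT_zero_forall_mem_sphere {P : ℂ → Prop} (h : ∀ᶠ z in 𝓝[≠] c, P z) :
    ∀ᶠ ρ in 𝓝[>] (0 : ℝ), ∀ z ∈ sphere c ρ, P z := by
  obtain ⟨ε, hε, hP⟩ := Metric.eventually_nhds_iff_ball.1 (eventually_nhdsWithin_iff.1 h)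
  filter_upwards [Ioo_mem_nhdsGT hε] with ρ hρ z hz
  exact hP z (sphere_subset_ball hρ.2 hz) (ne_of_mem_sphere hz hρ.1.ne')

theorem eventually_circleIntegrable {F : ℂ → E} (h : ∀ᶠ z in 𝓝[≠] c, ContinuousAt F z) :
    ∀ᶠ ρ in 𝓝[>] (0 : ℝ), CircleIntegrable F c ρ := by
  filter_upwards [eventually_nhdsGT_zero_forall_mem_sphere h, self_mem_nhdsWithin] with ρ hF hρ
  exact ContinuousOn.circleIntegrable (le_of_lt hρ) fun z hz => (hF z hz).continuousWithinAt

theorem eventually_circleIntegral_congr [NormedSpace ℂ E] {F G : ℂ → E}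
    (h : ∀ᶠ z in 𝓝[≠] c, F z = G z) :
    ∀ᶠ ρ in 𝓝[>] (0 : ℝ), ∮ z in C(c, ρ), F z = ∮ z in C(c, ρ), G z := by
  filter_upwards [eventually_nhdsGT_zero_forall_mem_sphere h, self_mem_nhdsWithin] with ρ hFG hρ
  exact circleIntegral.integral_congr (le_of_lt hρ) hFG

theorem eventually_circleIntegral_eq_zero_of_isBigO_one [NormedSpace ℂ E] [CompleteSpace E]
    {F : ℂ → E} (hd : ∀ᶠ z in 𝓝[≠] c, DifferentiableAt ℂ F z) (hb : F =O[𝓝[≠] c] fun _ => (1 : ℂ)) :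
    ∀ᶠ ρ in 𝓝[>] (0 : ℝ), ∮ z in C(c, ρ), F z = 0 := by
  obtain ⟨ε, hε, hdε⟩ := Metric.eventually_nhds_iff_ball.1 (eventually_nhdsWithin_iff.1 hd)
  have hbdd : IsBoundedUnder (· ≤ ·) (𝓝[≠] c) (norm ∘ fun z => F z - F c) :=
    (isBigO_one_iff ℂ).1 (hb.sub (isBigO_const_const (F c) one_ne_zero _))
  have hext := Complex.differentiableOn_update_limUnder_of_isLittleO (ball_mem_nhds c hε)
    (fun z hz => (hdε z hz.1 hz.2).differentiableWithinAt) hbdd.isLittleO_sub_self_inv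
  filter_upwards [Ioo_mem_nhdsGT hε] with ρ hρ
  rw [circleIntegral.integral_congr hρ.1.le fun z hz =>
    (update_of_ne (ne_of_mem_sphere hz hρ.1.ne') _ F).symm]
  exact (hext.diffContOnCl_ball (closedBall_subset_ball hρ.2)).circleIntegral_eq_zero hρ.1.le

end CircleIntegral

theorem eventually_circleIntegral_inv_sub_eq_deriv_mul_inv_sub {φ g : ℂ → ℂ} {c : ℂ}
    (hφ : AnalyticAt ℂ φ c) (hφ' : deriv φ c ≠ 0) (hg : AnalyticAt ℂ g c) (hgc : g c = c)
    (hgne : ¬ ∀ᶠ z in 𝓝 c, g z = z) :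
    ∀ᶠ ρ in 𝓝[>] (0 : ℝ),
      ∮ z in C(c, ρ), (z - g z)⁻¹ = ∮ z in C(c, ρ), deriv φ z * (φ z - φ (g z))⁻¹ := by
  have hgt : Tendsto g (𝓝 c) (𝓝 c) := by simpa only [hgc] using hg.continuousAt.tendsto
  have hpair : Tendsto (fun z => (z, g z)) (𝓝 c) (𝓝 (c, c)) := tendsto_id.prodMk_nhds hgt
  have hΔ : ∀ᶠ z in 𝓝[≠] c, z - g z ≠ 0 :=
    (analyticAt_id.sub hg).eventually_eq_zero_or_eventually_ne_zero.resolve_left fun h =>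
      hgne (h.mono fun z hz => (sub_eq_zero.1 hz).symm)
  have hΦ : ∀ᶠ z in 𝓝[≠] c, φ z - φ (g z) ≠ 0 := by
    filter_upwards [hΔ, nhdsWithin_le_nhds
      ((hφ.hasStrictDerivAt.isTheta_sub hφ').isBigO_symm.comp_tendsto hpair).eq_zero_imp]
      with z hΔz himp using fun h => hΔz (himp h)
  have hana : ∀ᶠ z in 𝓝[≠] c, AnalyticAt ℂ g z ∧ AnalyticAt ℂ φ z ∧ AnalyticAt ℂ φ (g z) :=
    nhdsWithin_le_nhds (hg.eventually_analyticAt.and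
      (hφ.eventually_analyticAt.and (hgt.eventually hφ.eventually_analyticAt)))
  have hd₁ : ∀ᶠ z in 𝓝[≠] c, DifferentiableAt ℂ (fun z => (z - g z)⁻¹) z := by
    filter_upwards [hΔ, hana] with z hΔz hz
    exact (differentiableAt_id.sub hz.1.differentiableAt).inv hΔz
  have hd₂ : ∀ᶠ z in 𝓝[≠] c, DifferentiableAt ℂ (fun z => deriv φ z * (φ z - φ (g z))⁻¹) z := by
    filter_upwards [hΦ, hana] with z hΦz ⟨hgz, hφz, hφgz⟩
    exact hφz.deriv.differentiableAt.mul ((hφz.differentiableAt.sub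
      (hφgz.differentiableAt.comp z hgz.differentiableAt)).inv hΦz)
  have hzero := eventually_circleIntegral_eq_zero_of_isBigO_one
    ((hd₁.and hd₂).mono fun z h => h.1.sub h.2)
    (((hφ.isBigO_inv_sub_sub_deriv_mul_inv_sub hφ').comp_tendsto hpair).mono nhdsWithin_le_nhds)
  filter_upwards [hzero, eventually_circleIntegrable (hd₁.mono fun z h => h.continuousAt),
    eventually_circleIntegrable (hd₂.mono fun z h => h.continuousAt)] with ρ h₀ h₁ h₂
  rw [← sub_eq_zero, ← circleIntegral.integral_sub h₁ h₂]
  exact h₀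

section Pullback

variable {φ : ℂ → ℂ} {c : ℂ} {R R' ρ : ℝ}

theorem circleIntegral_deriv_mul_zpow_comp_eq_zero (hρ : 0 ≤ ρ)
    (hφ : ∀ z ∈ sphere c ρ, DifferentiableAt ℂ φ z) (hne : ∀ z ∈ sphere c ρ, φ z ≠ 0)
    {k : ℤ} (hk : k ≠ -1) : ∮ z in C(c, ρ), deriv φ z * φ z ^ k = 0 := by
  refine circleIntegral.integral_eq_zero_of_hasDerivWithinAt (f := fun z => φ z ^ (k + 1) / (k + 1))
    hρ fun z hz => HasDerivAt.hasDerivWithinAt ?_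
  have hk' : (k + 1 : ℂ) ≠ 0 := by exact_mod_cast (show k + 1 ≠ 0 by omega)
  refine (((hasDerivAt_zpow (k + 1) (φ z) (Or.inl (hne z hz))).comp z
    (hφ z hz).hasDerivAt).div_const (k + 1 : ℂ)).congr_deriv ?_
  rw [add_sub_cancel_right]
  push_cast
  field_simp

theorem circleIntegral_deriv_mul_inv_eq_two_pi_I
    (hφ : DifferentiableOn ℂ φ (ball c R)) (hφc : φ c = 0) (hφ' : deriv φ c ≠ 0)
    (hne : ∀ z ∈ ball c R, z ≠ c → φ z ≠ 0) (hρ : 0 < ρ) (hρR : ρ < R) :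
    ∮ z in C(c, ρ), deriv φ z * (φ z)⁻¹ = 2 * π * I := by
  set w := dslope φ c
  have hφw : φ = fun z => (z - c) * w z := funext fun z => by
    simpa [hφc] using (sub_smul_dslope φ c z).symm
  have hw : DifferentiableOn ℂ w (ball c R) :=
    (Complex.differentiableOn_dslope (ball_mem_nhds c (hρ.trans hρR))).2 hφ
  have hw0 : ∀ z ∈ ball c R, w z ≠ 0 := by
    intro z hz
    rcases eq_or_ne z c with rfl | hzc
    · simpa [w, dslope_same] using hφ'
    · exact fun h => hne z hz hzc (by simp [hφw, h])
  have hlog : EqOn (fun z => deriv φ z * (φ z)⁻¹) (fun z => (z - c)⁻¹ + deriv w z * (w z)⁻¹)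
      (sphere c ρ) := fun z hz => by
    have hzR := sphere_subset_ball hρR hz
    have hzc : z - c ≠ 0 := sub_ne_zero.2 (ne_of_mem_sphere hz hρ.ne')
    have hderiv : HasDerivAt (fun z => (z - c) * w z) (1 * w z + (z - c) * deriv w z) z :=
      ((hasDerivAt_id z).sub_const c).mul
        (hw.differentiableAt (isOpen_ball.mem_nhds hzR)).hasDerivAt
    simp only [hφw, hderiv.deriv]
    field_simp [hw0 z hzR]
  have hwd : DifferentiableOn ℂ (fun z => deriv w z * (w z)⁻¹) (ball c R) :=
    (hw.deriv isOpen_ball).mul (hw.inv hw0)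
  have hinv : CircleIntegrable (fun z => (z - c)⁻¹) c ρ :=
    ((continuousOn_id.sub continuousOn_const).inv₀ fun z hz =>
      sub_ne_zero.2 (ne_of_mem_sphere hz hρ.ne')).circleIntegrable hρ.le
  rw [circleIntegral.integral_congr hρ.le hlog,
    circleIntegral.integral_add hinv
      ((hwd.continuousOn.mono (sphere_subset_ball hρR)).circleIntegrable hρ.le),
    circleIntegral.integral_sub_center_inv c hρ.ne',
    (hwd.diffContOnCl_ball (closedBall_subset_ball hρR)).circleIntegral_eq_zero hρ.le, add_zero]

theorem circleIntegrable_deriv_mul_inv_pow_mul_comp {W : ℂ → ℂ}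
    (hφ : DifferentiableOn ℂ φ (ball c R)) (hne : ∀ z ∈ ball c R, z ≠ c → φ z ≠ 0)
    (hmaps : MapsTo φ (ball c R) (ball 0 R')) (hW : DifferentiableOn ℂ W (ball 0 R'))
    (hρ : 0 < ρ) (hρR : ρ < R) (m : ℕ) :
    CircleIntegrable (fun z => deriv φ z * ((φ z ^ m)⁻¹ * W (φ z))) c ρ := by
  refine ContinuousOn.circleIntegrable hρ.le fun z hz => ContinuousAt.continuousWithinAt ?_
  have hzR := sphere_subset_ball hρR hz
  have hφz := hne z hzR (ne_of_mem_sphere hz hρ.ne')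
  have hφd := hφ.differentiableAt (isOpen_ball.mem_nhds hzR)
  exact ((hφ.deriv isOpen_ball).differentiableAt (isOpen_ball.mem_nhds hzR)).continuousAt.mul
    (((hφd.continuousAt.pow m).inv₀ (pow_ne_zero m hφz)).mul
      ((hW.differentiableAt (isOpen_ball.mem_nhds (hmaps hzR))).continuousAt.comp hφd.continuousAt))

theorem circleIntegral_deriv_mul_inv_pow_succ_mul_comp_eq_add {W : ℂ → ℂ}
    (hφ : DifferentiableOn ℂ φ (ball c R)) (hφc : φ c = 0)
    (hne : ∀ z ∈ ball c R, z ≠ c → φ z ≠ 0) (hmaps : MapsTo φ (ball c R) (ball 0 R'))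
    (hW : DifferentiableOn ℂ W (ball 0 R')) (hρ : 0 < ρ) (hρR : ρ < R) (m : ℕ) :
    ∮ z in C(c, ρ), deriv φ z * ((φ z ^ (m + 1))⁻¹ * W (φ z))
      = W 0 * (∮ z in C(c, ρ), deriv φ z * (φ z ^ (m + 1))⁻¹)
        + ∮ z in C(c, ρ), deriv φ z * ((φ z ^ m)⁻¹ * dslope W 0 (φ z)) := by
  have hR' : ball (0 : ℂ) R' ∈ 𝓝 0 :=
    isOpen_ball.mem_nhds (hφc ▸ hmaps (mem_ball_self (hρ.trans hρR)))
  have heq : EqOn (fun z => deriv φ z * ((φ z ^ (m + 1))⁻¹ * W (φ z)))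
      (fun z => deriv φ z * ((φ z ^ (m + 1))⁻¹ * (fun _ => W 0) (φ z))
        + deriv φ z * ((φ z ^ m)⁻¹ * dslope W 0 (φ z))) (sphere c ρ) := fun z hz => by
    have hφz := hne z (sphere_subset_ball hρR hz) (ne_of_mem_sphere hz hρ.ne')
    have hWφ := sub_smul_dslope W 0 (φ z)
    rw [sub_zero, smul_eq_mul] at hWφ
    dsimp only
    rw [← sub_add_cancel (W (φ z)) (W 0), ← hWφ, pow_succ]
    field_simp
    ring
  rw [circleIntegral.integral_congr hρ.le heq,
    circleIntegral.integral_add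
      (circleIntegrable_deriv_mul_inv_pow_mul_comp hφ hne hmaps (differentiableOn_const (W 0))
        hρ hρR _)
      (circleIntegrable_deriv_mul_inv_pow_mul_comp hφ hne hmaps
        ((Complex.differentiableOn_dslope hR').2 hW) hρ hρR _),
    ← circleIntegral.integral_const_mul]
  congr 1
  exact circleIntegral.integral_congr hρ.le fun z _ => by ring

/-- `(swap dslope 0)^[n] V 0` is the `n`-th Taylor coefficient of `V` at `0`, i.e. the residue of
`V w / w ^ (n + 1)`. -/
theorem circleIntegral_deriv_mul_inv_pow_mul_comp {V : ℂ → ℂ}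
    (hφ : DifferentiableOn ℂ φ (ball c R)) (hφc : φ c = 0) (hφ' : deriv φ c ≠ 0)
    (hne : ∀ z ∈ ball c R, z ≠ c → φ z ≠ 0) (hmaps : MapsTo φ (ball c R) (ball 0 R'))
    (hV : DifferentiableOn ℂ V (ball 0 R')) (hρ : 0 < ρ) (hρR : ρ < R) (n : ℕ) :
    ∮ z in C(c, ρ), deriv φ z * ((φ z ^ (n + 1))⁻¹ * V (φ z))
      = 2 * π * I * (swap dslope 0)^[n] V 0 := by
  have hR' : ball (0 : ℂ) R' ∈ 𝓝 0 :=
    isOpen_ball.mem_nhds (hφc ▸ hmaps (mem_ball_self (hρ.trans hρR)))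
  induction n generalizing V with
  | zero =>
    have hhol : DifferentiableOn ℂ (fun z => deriv φ z * dslope V 0 (φ z)) (ball c R) :=
      (hφ.deriv isOpen_ball).mul (((Complex.differentiableOn_dslope hR').2 hV).comp hφ hmaps)
    rw [circleIntegral_deriv_mul_inv_pow_succ_mul_comp_eq_add hφ hφc hne hmaps hV hρ hρR]
    simp only [zero_add, pow_one, pow_zero, inv_one, one_mul,
      circleIntegral_deriv_mul_inv_eq_two_pi_I hφ hφc hφ' hne hρ hρR,
      (hhol.diffContOnCl_ball (closedBall_subset_ball hρR)).circleIntegral_eq_zero hρ.le,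
      Function.iterate_zero, id]
    ring
  | succ n ih =>
    have hpow : EqOn (fun z => deriv φ z * (φ z ^ (n + 1 + 1))⁻¹)
        (fun z => deriv φ z * φ z ^ (-((n + 2 : ℕ) : ℤ))) (sphere c ρ) := fun z _ => by
      simp only [zpow_neg, zpow_natCast]
    have hsph : ∀ z ∈ sphere c ρ, z ∈ ball c R := fun z hz => sphere_subset_ball hρR hz
    rw [circleIntegral_deriv_mul_inv_pow_succ_mul_comp_eq_add hφ hφc hne hmaps hV hρ hρR,
      circleIntegral.integral_congr hρ.le hpow,
      circleIntegral_deriv_mul_zpow_comp_eq_zero hρ.le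
        (fun z hz => hφ.differentiableAt (isOpen_ball.mem_nhds (hsph z hz)))
        (fun z hz => hne z (hsph z hz) (ne_of_mem_sphere hz hρ.ne')) (by omega),
      ih ((Complex.differentiableOn_dslope hR').2 hV), Function.iterate_succ_apply]
    simp only [mul_zero, zero_add, swap]

end Pullback

theorem eventually_circleIntegral_deriv_mul_inv_pow_mul_comp {φ V : ℂ → ℂ} {c : ℂ}
    (hφ : AnalyticAt ℂ φ c) (hφc : φ c = 0) (hφ' : deriv φ c ≠ 0) (hV : AnalyticAt ℂ V 0)
    (n : ℕ) :
    ∀ᶠ ρ in 𝓝[>] (0 : ℝ), ∮ z in C(c, ρ), deriv φ z * ((φ z ^ (n + 1))⁻¹ * V (φ z))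
      = 2 * π * I * (swap dslope 0)^[n] V 0 := by
  obtain ⟨R', hR', hVR'⟩ := Metric.eventually_nhds_iff_ball.1 hV.eventually_analyticAt
  have hne : ∀ᶠ z in 𝓝[≠] c, φ z ≠ 0 :=
    hφ.eventually_eq_zero_or_eventually_ne_zero.resolve_left fun h => by
      have h' : φ =ᶠ[𝓝 c] fun _ => 0 := h
      exact hφ' (by rw [h'.deriv_eq, deriv_const])
  have hφt : Tendsto φ (𝓝 c) (𝓝 0) := hφc ▸ hφ.continuousAt.tendsto
  obtain ⟨R, hR, hφR⟩ := Metric.eventually_nhds_iff_ball.1 (hφ.eventually_analyticAt.and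
    ((hφt.eventually (ball_mem_nhds 0 hR')).and (eventually_nhdsWithin_iff.1 hne)))
  filter_upwards [Ioo_mem_nhdsGT hR] with ρ hρ
  exact circleIntegral_deriv_mul_inv_pow_mul_comp
    (fun z hz => (hφR z hz).1.differentiableAt.differentiableWithinAt) hφc hφ'
    (fun z hz => (hφR z hz).2.2) (fun z hz => (hφR z hz).2.1)
    (fun w hw => (hVR' w hw).differentiableAt.differentiableWithinAt) hρ.1 hρ.2 n

theorem exists_eventually_circleIntegral_deriv_mul_inv_sub_comp_eq {f : ℂ → ℂ}
    (hf : AnalyticAt ℂ f 0) (hf0 : f 0 = 0) (hfne : ¬ ∀ᶠ z in 𝓝 0, f z = z) :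
    ∃ β : ℂ, ∀ φ : ℂ → ℂ, AnalyticAt ℂ φ 0 → φ 0 = 0 → deriv φ 0 ≠ 0 →
      ∀ᶠ ρ in 𝓝[>] (0 : ℝ), ∮ z in C(0, ρ), deriv φ z * (φ z - f (φ z))⁻¹ = 2 * π * I * β := by
  obtain ⟨k, U, hU, hU0, hfac⟩ := (analyticAt_id.sub hf).exists_eventuallyEq_pow_smul_nonzero_iff.2
    fun h => hfne (h.mono fun z hz => (sub_eq_zero.1 hz).symm)
  obtain ⟨n, rfl⟩ : ∃ n, k = n + 1 := Nat.exists_eq_succ_of_ne_zero fun hk =>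
    hU0 (by simpa [hk, hf0] using hfac.self_of_nhds.symm)
  refine ⟨(swap dslope 0)^[n] U⁻¹ 0, fun φ hφ hφ0 hφ' => ?_⟩
  have hfac' : ∀ᶠ w in 𝓝 0, (w - f w)⁻¹ = (w ^ (n + 1))⁻¹ * (U w)⁻¹ := hfac.mono fun w hw => by
    simp only [Pi.sub_apply, id, sub_zero, smul_eq_mul] at hw
    rw [hw, mul_inv]
  have hinv : ∀ᶠ z in 𝓝 0, (φ z - f (φ z))⁻¹ = (φ z ^ (n + 1))⁻¹ * (U (φ z))⁻¹ :=
    (hφ0 ▸ hφ.continuousAt.tendsto).eventually hfac'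
  filter_upwards [eventually_circleIntegral_congr
      (nhdsWithin_le_nhds (hinv.mono fun z hz => congrArg (deriv φ z * ·) hz)),
    eventually_circleIntegral_deriv_mul_inv_pow_mul_comp hφ hφ0 hφ' (hU.inv hU0) n]
    with ρ h₁ h₂
  exact h₁.trans h₂

theorem index_invariant_tangent_to_identity_general (f g : ℂ → ℂ)
    (hf : AnalyticAt ℂ f 0) (hg : AnalyticAt ℂ g 0)
    (hf0 : f 0 = 0) (hg0 : g 0 = 0)
    (hfne : ¬ ∀ᶠ z in nhds (0 : ℂ), f z = z)
    (hgne : ¬ ∀ᶠ z in nhds (0 : ℂ), g z = z)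
    (hconj : ∃ φ : ℂ → ℂ, AnalyticAt ℂ φ 0 ∧ φ 0 = 0 ∧ deriv φ 0 ≠ 0 ∧
      ∀ᶠ z in nhds (0 : ℂ), φ (g z) = f (φ z)) :
    ∃ ρ₀ > (0 : ℝ), ∀ ρ₁ ρ₂ : ℝ, 0 < ρ₁ → ρ₁ < ρ₀ → 0 < ρ₂ → ρ₂ < ρ₀ →
      (2 * Real.pi * I)⁻¹ • (∮ z in C(0, ρ₁), (z - f z)⁻¹)
        = (2 * Real.pi * I)⁻¹ • (∮ z in C(0, ρ₂), (z - g z)⁻¹) := by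
  obtain ⟨φ, hφ, hφ0, hφ', hconj⟩ := hconj
  obtain ⟨β, hβ⟩ := exists_eventually_circleIntegral_deriv_mul_inv_sub_comp_eq hf hf0 hfne
  have hf' : ∀ᶠ ρ in 𝓝[>] (0 : ℝ), ∮ z in C(0, ρ), (z - f z)⁻¹ = 2 * π * I * β := by
    simpa using hβ id analyticAt_id rfl (by simp)
  have hg' : ∀ᶠ ρ in 𝓝[>] (0 : ℝ), ∮ z in C(0, ρ), (z - g z)⁻¹ = 2 * π * I * β := by
    filter_upwards [eventually_circleIntegral_inv_sub_eq_deriv_mul_inv_sub hφ hφ' hg hg0 hgne,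
      eventually_circleIntegral_congr (F := fun z => deriv φ z * (φ z - φ (g z))⁻¹)
        (nhdsWithin_le_nhds (hconj.mono fun z hz => by rw [hz])),
      hβ φ hφ hφ0 hφ'] with ρ h₁ h₂ h₃
    rw [h₁, h₂, h₃]
  obtain ⟨ρ₀, hρ₀, h⟩ := (nhdsGT_basis 0).eventually_iff.1 (hf'.and hg')
  exact ⟨ρ₀, hρ₀, fun ρ₁ ρ₂ h₁ h₁' h₂ h₂' => by rw [(h ⟨h₁, h₁'⟩).1, (h ⟨h₂, h₂'⟩).2]⟩

/-- the index `β = (1/2πi) ∮ dz/(z − f z)` over a small positive circle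
around `0` is invariant under holomorphic local conjugation of germs tangent to the
identity. -/
theorem index_invariant_tangent_to_identity (f g : ℂ → ℂ)
    (hf : AnalyticAt ℂ f 0) (hg : AnalyticAt ℂ g 0)
    (hf0 : f 0 = 0) (hg0 : g 0 = 0)
    (hf1 : deriv f 0 = 1) (hg1 : deriv g 0 = 1)
    (hfne : ¬ ∀ᶠ z in nhds (0 : ℂ), f z = z)
    (hgne : ¬ ∀ᶠ z in nhds (0 : ℂ), g z = z)
    (hconj : ∃ φ : ℂ → ℂ, AnalyticAt ℂ φ 0 ∧ φ 0 = 0 ∧ deriv φ 0 ≠ 0 ∧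
      ∀ᶠ z in nhds (0 : ℂ), φ (g z) = f (φ z)) :
    ∃ ρ₀ > (0 : ℝ), ∀ ρ₁ ρ₂ : ℝ, 0 < ρ₁ → ρ₁ < ρ₀ → 0 < ρ₂ → ρ₂ < ρ₀ →
      (2 * Real.pi * I)⁻¹ • (∮ z in C(0, ρ₁), (z - f z)⁻¹)
        = (2 * Real.pi * I)⁻¹ • (∮ z in C(0, ρ₂), (z - g z)⁻¹) :=
  index_invariant_tangent_to_identity_general f g hf hg hf0 hg0 hfne hgne hconj
end

section
/- Let f be holomorphic near 0 ∈ ℂ with f(0) = 0 and multiplier λ = f'(0) with |λ| = 1. If 0 is stable for f (i.e. there is a neighbourhood of 0 on which all iterates of f are defined and uniformly bounded), then f is holomorphically linearizable: there is a local biholomorphism φ fixing 0 with φ ∘ f ∘ φ⁻¹ (z) = λz. -/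
/-!
The Cesàro means `φₖ = (1/k) ∑_{j<k} λ⁻ʲ fʲ` are holomorphic on the disc of stability, bounded
there by the bound on the orbits, normalized by `φₖ 0 = 0`, `φₖ' 0 = 1`, and satisfy
`φₖ ∘ f - λ φₖ = (λ/k) (λ⁻ᵏ fᵏ - id)`, which tends to `0` since `|λ| = 1` and orbits are bounded.
By Cauchy's estimates the Taylor coefficients of the `φₖ` are dominated by one geometric
sequence, so along a subsequence all coefficients converge and the `φₖ` converge locally
uniformly on a smaller disc. The limit `φ` is holomorphic with `φ 0 = 0`, `φ' 0 = 1` and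
`φ ∘ f = λ φ`.
-/

open Metric Filter Topology

section Cesaro

variable {𝕜 : Type*} [RCLike 𝕜]

noncomputable def cesaroMean (f : 𝕜 → 𝕜) (lam : 𝕜) (k : ℕ) (z : 𝕜) : 𝕜 :=
  (k : 𝕜)⁻¹ * ∑ j ∈ Finset.range k, (lam ^ j)⁻¹ * f^[j] z

variable {f : 𝕜 → 𝕜} {lam : 𝕜}

lemma cesaroMean_apply_map (hlam : lam ≠ 0) (k : ℕ) (z : 𝕜) :
    cesaroMean f lam k (f z) =
      lam * cesaroMean f lam k z + lam * (k : 𝕜)⁻¹ * ((lam ^ k)⁻¹ * f^[k] z - z) := by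
  have hshift : ∑ j ∈ Finset.range k, (lam ^ j)⁻¹ * f^[j] (f z) =
      lam * ∑ j ∈ Finset.range k, (lam ^ (j + 1))⁻¹ * f^[j + 1] z := by
    rw [Finset.mul_sum]
    refine Finset.sum_congr rfl fun j _ => ?_
    rw [Function.iterate_succ_apply, pow_succ]
    field_simp
  have htelescope := Finset.sum_range_succ' (fun j => (lam ^ j)⁻¹ * f^[j] z) k
  rw [Finset.sum_range_succ] at htelescope
  simp only [cesaroMean, hshift]
  simp only [pow_zero, inv_one, one_mul, Function.iterate_zero, id_eq] at htelescope
  linear_combination -(lam * (k : 𝕜)⁻¹) * htelescope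

lemma norm_cesaroMean_le (hlam : ‖lam‖ = 1) {z : 𝕜} {M : ℝ} (hM : 0 ≤ M)
    (horb : ∀ j, ‖f^[j] z‖ ≤ M) (k : ℕ) : ‖cesaroMean f lam k z‖ ≤ M := by
  rcases k.eq_zero_or_pos with rfl | hk
  · simpa [cesaroMean] using hM
  have hterm : ∀ j, ‖(lam ^ j)⁻¹ * f^[j] z‖ ≤ M := fun j => by
    simpa [norm_pow, hlam] using horb j
  calc ‖cesaroMean f lam k z‖
      ≤ (k : ℝ)⁻¹ * ∑ j ∈ Finset.range k, ‖(lam ^ j)⁻¹ * f^[j] z‖ := by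
        rw [cesaroMean, norm_mul, norm_inv, RCLike.norm_natCast]
        gcongr
        exact norm_sum_le _ _
    _ ≤ (k : ℝ)⁻¹ * (k * M) := by
        gcongr
        simpa using Finset.sum_le_sum fun j (_ : j ∈ Finset.range k) => hterm j
    _ = M := by field_simp

lemma cesaroMean_apply_zero (hf0 : f 0 = 0) (k : ℕ) : cesaroMean f lam k 0 = 0 := by
  simp [cesaroMean, Function.iterate_fixed hf0]

lemma hasDerivAt_cesaroMean (hf : HasDerivAt f lam 0) (hf0 : f 0 = 0) (hlam : lam ≠ 0)
    {k : ℕ} (hk : k ≠ 0) : HasDerivAt (cesaroMean f lam k) 1 0 := by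
  have hsum := HasDerivAt.fun_sum (u := Finset.range k) fun j _ =>
    (HasDerivAt.iterate 0 hf hf0 j).const_mul (lam ^ j)⁻¹
  have hone : (k : 𝕜)⁻¹ * ∑ j ∈ Finset.range k, (lam ^ j)⁻¹ * lam ^ j = 1 := by
    simp [inv_mul_cancel₀ (pow_ne_zero _ hlam), hk]
  exact hone ▸ hsum.const_mul (k : 𝕜)⁻¹

lemma tendsto_cesaroMean_apply_map_sub (hlam : ‖lam‖ = 1) {z : 𝕜} {M : ℝ}
    (horb : ∀ j, ‖f^[j] z‖ ≤ M) :
    Tendsto (fun k => cesaroMean f lam k (f z) - lam * cesaroMean f lam k z) atTop (𝓝 0) := by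
  have hlam0 : lam ≠ 0 := norm_ne_zero_iff.mp (by simp [hlam])
  simp only [cesaroMean_apply_map hlam0, add_sub_cancel_left]
  rw [tendsto_zero_iff_norm_tendsto_zero]
  refine squeeze_zero (fun _ => norm_nonneg _) (g := fun k : ℕ => (k : ℝ)⁻¹ * (M + ‖z‖))
    (fun k => ?_) ?_
  · rw [norm_mul, norm_mul, hlam, one_mul, norm_inv, RCLike.norm_natCast]
    gcongr
    calc ‖(lam ^ k)⁻¹ * f^[k] z - z‖ ≤ ‖(lam ^ k)⁻¹ * f^[k] z‖ + ‖z‖ := norm_sub_le _ _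
      _ ≤ M + ‖z‖ := by gcongr; simpa [norm_pow, hlam] using horb k
  · simpa using tendsto_inv_atTop_zero.comp tendsto_natCast_atTop_atTop |>.mul_const (M + ‖z‖)

lemma map_eq_mul_of_tendsto_cesaroMean (hlam : ‖lam‖ = 1) {z : 𝕜} {M : ℝ}
    (horb : ∀ j, ‖f^[j] z‖ ≤ M) {ψ : ℕ → ℕ} (hψ : Tendsto ψ atTop atTop) {φ : 𝕜 → 𝕜}
    (hz : Tendsto (fun i => cesaroMean f lam (ψ i) z) atTop (𝓝 (φ z)))
    (hfz : Tendsto (fun i => cesaroMean f lam (ψ i) (f z)) atTop (𝓝 (φ (f z)))) :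
    φ (f z) = lam * φ z := by
  have hsum := ((tendsto_cesaroMean_apply_map_sub hlam horb).comp hψ).add (hz.const_mul lam)
  simp only [Function.comp_def, sub_add_cancel, zero_add] at hsum
  exact tendsto_nhds_unique hfz hsum

lemma differentiableOn_cesaroMean {s : Set 𝕜} (hf : ∀ j, DifferentiableOn 𝕜 f^[j] s) (k : ℕ) :
    DifferentiableOn 𝕜 (cesaroMean f lam k) s :=
  (DifferentiableOn.fun_sum fun j _ => (hf j).const_mul _).const_mul _

end Cesaro

lemma DifferentiableOn.iterate_of_forall_iterate_mem {𝕜 E : Type*} [NontriviallyNormedField 𝕜]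
    [NormedAddCommGroup E] [NormedSpace 𝕜 E] {f : E → E} {s t : Set E}
    (hf : DifferentiableOn 𝕜 f t) (hst : ∀ z ∈ s, ∀ k, f^[k] z ∈ t) (j : ℕ) :
    DifferentiableOn 𝕜 f^[j] s := by
  set T := {z | ∀ k, f^[k] z ∈ t}
  have hfT : DifferentiableOn 𝕜 f T := hf.mono fun z hz => hz 0
  have hTT : Set.MapsTo f T T := fun z hz k => by
    simpa only [← Function.iterate_succ_apply] using hz (k + 1)
  exact (hfT.iterate hTT j).mono hst

structure IsLinearizingCoordinate (f : ℂ → ℂ) (lam : ℂ) (φ : ℂ → ℂ) : Prop where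
  analyticAt : AnalyticAt ℂ φ 0
  map_zero : φ 0 = 0
  deriv_eq_one : deriv φ 0 = 1
  linearizes : ∀ᶠ z in 𝓝 0, φ (f z) = lam * φ z

lemma isLinearizingCoordinate_of_tendstoLocallyUniformlyOn {f : ℂ → ℂ} {lam : ℂ}
    (hf : HasDerivAt f lam 0) (hf0 : f 0 = 0) (hlam : ‖lam‖ = 1) {U : Set ℂ} (hU : IsOpen U)
    (h0 : (0 : ℂ) ∈ U) {M : ℝ} (horb : ∀ z ∈ U, ∀ j, ‖f^[j] z‖ ≤ M)
    (hdiff : ∀ k, DifferentiableOn ℂ (cesaroMean f lam k) U) {ψ : ℕ → ℕ}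
    (hψ : Tendsto ψ atTop atTop) {φ : ℂ → ℂ}
    (hconv : TendstoLocallyUniformlyOn (fun i => cesaroMean f lam (ψ i)) φ atTop U) :
    IsLinearizingCoordinate f lam φ where
  analyticAt :=
    (hconv.differentiableOn (Eventually.of_forall fun i => hdiff _) hU).analyticAt
      (hU.mem_nhds h0)
  map_zero := tendsto_nhds_unique (hconv.tendsto_at h0) (by simp [cesaroMean_apply_zero hf0])
  deriv_eq_one := by
    have hlam0 : lam ≠ 0 := norm_ne_zero_iff.mp (by simp [hlam])
    refine tendsto_nhds_unique
      ((hconv.deriv (Eventually.of_forall fun i => hdiff _) hU).tendsto_at h0) ?_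
    refine tendsto_const_nhds.congr' ((hψ.eventually_ge_atTop 1).mono fun i hi => ?_)
    exact ((hasDerivAt_cesaroMean hf hf0 hlam0 (by omega)).deriv).symm
  linearizes := by
    have hfU : ∀ᶠ z in 𝓝 0, f z ∈ U :=
      hf.continuousAt.preimage_mem_nhds (by rw [hf0]; exact hU.mem_nhds h0)
    filter_upwards [hU.mem_nhds h0, hfU] with z hz hfz
    exact map_eq_mul_of_tendsto_cesaroMean hlam (horb z hz) hψ
      (hconv.tendsto_at hz) (hconv.tendsto_at hfz)

lemma norm_taylorCoeff_le {f : ℂ → ℂ} {c : ℂ} {R M ρ : ℝ}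
    (hf : DifferentiableOn ℂ f (ball c R)) (hM : ∀ z ∈ ball c R, ‖f z‖ ≤ M)
    (hρ : 0 < ρ) (hρR : ρ < R) (n : ℕ) :
    ‖(n.factorial : ℂ)⁻¹ * iteratedDeriv n f c‖ ≤ M / ρ ^ n := by
  have hsub : closedBall c ρ ⊆ ball c R := closedBall_subset_ball hρR
  have hcl : DiffContOnCl ℂ f (ball c ρ) :=
    (hf.mono (by rwa [closure_ball c hρ.ne'])).diffContOnCl
  have hcauchy := Complex.norm_iteratedDeriv_le_of_forall_mem_sphere_norm_le n hρ hcl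
    fun z hz => hM z (hsub (sphere_subset_closedBall hz))
  rw [norm_mul, norm_inv, Complex.norm_natCast]
  calc (n.factorial : ℝ)⁻¹ * ‖iteratedDeriv n f c‖
      ≤ (n.factorial : ℝ)⁻¹ * (n.factorial * M / ρ ^ n) := by gcongr
    _ = M / ρ ^ n := by field_simp

lemma mul_pow_le_geometric {d C ρ s : ℝ} {n : ℕ} (hρ : 0 < ρ) (hs : 0 ≤ s) (hsρ : s ≤ ρ / 2)
    (hd : d ≤ C / ρ ^ n) (hd0 : 0 ≤ d) : d * s ^ n ≤ C * (1 / 2) ^ n :=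
  calc d * s ^ n ≤ C / ρ ^ n * (ρ / 2) ^ n := by gcongr; exact hd0.trans hd
    _ = C * (1 / 2) ^ n := by rw [div_pow, one_div_pow]; field_simp

lemma tendstoUniformlyOn_tsum_of_tendsto_coeff {a : ℕ → ℕ → ℂ} {b : ℕ → ℂ} {c : ℂ} {B ρ : ℝ}
    (hρ : 0 < ρ) (ha : ∀ k n, ‖a k n‖ ≤ B / ρ ^ n)
    (hab : ∀ n, Tendsto (fun k => a k n) atTop (𝓝 (b n))) :
    TendstoUniformlyOn (fun k z => ∑' n, a k n * (z - c) ^ n)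
      (fun z => ∑' n, b n * (z - c) ^ n) atTop (ball c (ρ / 2)) := by
  have hb : ∀ n, ‖b n‖ ≤ B / ρ ^ n := fun n => le_of_tendsto' (hab n).norm fun k => ha k n
  have hdiff : ∀ k n, ‖b n - a k n‖ ≤ 2 * B / ρ ^ n := fun k n =>
    (norm_sub_le _ _).trans (by rw [two_mul, add_div]; exact add_le_add (hb n) (ha k n))
  have hgeom : ∀ C : ℝ, Summable fun n : ℕ => C * (1 / 2 : ℝ) ^ n :=
    fun C => summable_geometric_two.mul_left C
  have hbound : ∀ k n, ‖b n - a k n‖ * (ρ / 2) ^ n ≤ 2 * B * (1 / 2) ^ n := fun k n =>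
    mul_pow_le_geometric hρ (by positivity) le_rfl (hdiff k n) (norm_nonneg _)
  have herr : Tendsto (fun k => ∑' n, ‖b n - a k n‖ * (ρ / 2) ^ n) atTop (𝓝 0) := by
    simpa using tendsto_tsum_of_dominated_convergence (hgeom (2 * B))
      (fun n => ((hab n).const_sub (b n)).norm.mul_const ((ρ / 2) ^ n))
      (Eventually.of_forall fun k n => by
        rw [Real.norm_of_nonneg (by positivity)]; exact hbound k n)
  rw [Metric.tendstoUniformlyOn_iff]
  intro δ hδ
  filter_upwards [herr.eventually (gt_mem_nhds hδ)] with k hk z hz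
  have hz : ‖z - c‖ ≤ ρ / 2 := (mem_ball_iff_norm.mp hz).le
  have hsummable : ∀ d : ℕ → ℂ, (∀ n, ‖d n‖ ≤ B / ρ ^ n) → Summable fun n => d n * (z - c) ^ n :=
    fun d hd => (hgeom B).of_norm_bounded fun n => by
      rw [norm_mul, norm_pow]
      exact mul_pow_le_geometric hρ (norm_nonneg _) hz (hd n) (norm_nonneg _)
  calc dist (∑' n, b n * (z - c) ^ n) (∑' n, a k n * (z - c) ^ n)
      = ‖∑' n, (b n - a k n) * (z - c) ^ n‖ := by
        rw [dist_eq_norm, ← (hsummable b hb).tsum_sub (hsummable _ (ha k))]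
        simp only [sub_mul]
    _ ≤ ∑' n, ‖b n - a k n‖ * (ρ / 2) ^ n :=
        tsum_of_norm_bounded ((hgeom _).of_nonneg_of_le (fun n => by positivity) (hbound k)).hasSum
          fun n => by rw [norm_mul, norm_pow]; gcongr
    _ < δ := hk

/- Cauchy's estimates on the circle of radius `R / 2` give geometric bounds on the Taylor
coefficients; the series then converge uniformly on half of that disc. -/
theorem exists_strictMono_tendstoLocallyUniformlyOn_of_norm_le {F : ℕ → ℂ → ℂ} {c : ℂ}
    {R M : ℝ} (hR : 0 < R) (hF : ∀ k, DifferentiableOn ℂ (F k) (ball c R))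
    (hM : ∀ k, ∀ z ∈ ball c R, ‖F k z‖ ≤ M) :
    ∃ (φ : ℂ → ℂ) (ψ : ℕ → ℕ), StrictMono ψ ∧
      TendstoLocallyUniformlyOn (fun i => F (ψ i)) φ atTop (ball c (R / 4)) := by
  set a : ℕ → ℕ → ℂ := fun k n => (n.factorial : ℂ)⁻¹ * iteratedDeriv n (F k) c
  have ha : ∀ k n, ‖a k n‖ ≤ M / (R / 2) ^ n := fun k =>
    norm_taylorCoeff_le (hF k) (hM k) (half_pos hR) (half_lt_self hR)
  obtain ⟨b, -, ψ, hψ, hlim⟩ :=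
    (isCompact_univ_pi fun n => isCompact_closedBall (0 : ℂ) (M / (R / 2) ^ n)).isSeqCompact
      (x := a) fun k n _ => mem_closedBall_zero_iff.mpr (ha k n)
  have hunif := tendstoUniformlyOn_tsum_of_tendsto_coeff (c := c) (half_pos hR)
    (fun k => ha (ψ k)) (tendsto_pi_nhds.mp hlim)
  rw [div_div, show (2 : ℝ) * 2 = 4 by norm_num] at hunif
  refine ⟨_, ψ, hψ, (hunif.congr (Eventually.of_forall fun k z hz => ?_)).tendstoLocallyUniformlyOn⟩
  exact Complex.taylorSeries_eq_on_ball' (ball_subset_ball (by linarith) hz) (hF (ψ k))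

/-- an elliptic/indifferent fixed point which is stable is
holomorphically linearizable: if `f` is holomorphic on a disk around `0`, `f 0 = 0`,
`|f'(0)| = 1`, and there is a smaller disk whose orbits all stay in the domain,
then there is a local biholomorphism `φ` fixing `0` with `φ ∘ f = λ • φ` near `0`. -/
theorem stable_implies_linearizable (f : ℂ → ℂ) (lam : ℂ) (r : ℝ) (hr : 0 < r)
    (hf : AnalyticOnNhd ℂ f (ball (0 : ℂ) r))
    (hf0 : f 0 = 0) (hder : deriv f 0 = lam) (hlam : ‖lam‖ = 1)
    (hstable : ∃ ε > (0 : ℝ), ε ≤ r ∧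
      ∀ z ∈ ball (0 : ℂ) ε, ∀ k : ℕ, f^[k] z ∈ ball (0 : ℂ) r) :
    ∃ φ : ℂ → ℂ, AnalyticAt ℂ φ 0 ∧ φ 0 = 0 ∧ deriv φ 0 ≠ 0 ∧
      ∀ᶠ z in nhds (0 : ℂ), φ (f z) = lam * φ z := by
  obtain ⟨ε, hε, -, horb⟩ := hstable
  have horb_le : ∀ z ∈ ball (0 : ℂ) ε, ∀ j, ‖f^[j] z‖ ≤ r := fun z hz j =>
    (mem_ball_zero_iff.mp (horb z hz j)).le
  have hdiff (k : ℕ) : DifferentiableOn ℂ (cesaroMean f lam k) (ball 0 ε) :=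
    differentiableOn_cesaroMean (hf.differentiableOn.iterate_of_forall_iterate_mem horb) k
  obtain ⟨φ, ψ, hψ, hconv⟩ := exists_strictMono_tendstoLocallyUniformlyOn_of_norm_le hε hdiff
    fun k z hz => norm_cesaroMean_le hlam hr.le (horb_le z hz) k
  have hsub : ball (0 : ℂ) (ε / 4) ⊆ ball 0 ε := ball_subset_ball (by linarith)
  have hφ : IsLinearizingCoordinate f lam φ :=
    isLinearizingCoordinate_of_tendstoLocallyUniformlyOn
      (hder ▸ (hf 0 (mem_ball_self hr)).differentiableAt.hasDerivAt) hf0 hlam isOpen_ball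
      (mem_ball_self (by positivity)) (fun z hz => horb_le z (hsub hz))
      (fun k => (hdiff k).mono hsub) hψ.tendsto_atTop hconv
  exact ⟨φ, hφ.analyticAt, hφ.map_zero, by simp [hφ.deriv_eq_one], hφ.linearizes⟩
end

section
/- Every λ = e^{2πiθ} in the dense G_δ set ⋂_{q₀≥1} S(q₀) (where S(q₀) is the set of angles admitting a rational approximation |θ − p/q| < 2^{−q!} with denominator q ≥ q₀) satisfies the Cremer condition limsup_{m→∞} (−(1/m) log Ω_λ(m)) = +∞, where Ω_λ(m) = min_{1≤k≤m}|λ^k − 1|. -/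
open Filter

/-- `Ω_λ(m) = min_{1 ≤ k ≤ m} |λ^k − 1|`. -/
noncomputable def OmegaMin (lam : ℂ) (m : ℕ) : ℝ :=
  sInf {x : ℝ | ∃ k : ℕ, 1 ≤ k ∧ k ≤ m ∧ x = ‖lam ^ k - 1‖}

/-!
If `|θ - p/q| < 2^{-q!}`, then `λ^q = e^{2πi q (θ - p/q)}`, so
`Ω_λ(q) ≤ |λ^q - 1| ≤ 2πq · 2^{-q!}` and hence `-(1/q) log Ω_λ(q) ≥ (q-1)! log 2 - 2π`, which is
unbounded along the denominators supplied by the hypothesis. The logarithm is not the junk value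
`log 0 = 0` because `θ` is irrational: since `2^{-q!} ≤ 1/q²`, it has infinitely many
Dirichlet-quality rational approximations.
-/

open Real
open scoped Nat

theorem omegaMin_le_norm_pow_sub_one {lam : ℂ} {k m : ℕ} (hk : 1 ≤ k) (hkm : k ≤ m) :
    OmegaMin lam m ≤ ‖lam ^ k - 1‖ :=
  csInf_le ⟨0, by rintro x ⟨j, -, -, rfl⟩; exact norm_nonneg _⟩ ⟨k, hk, hkm, rfl⟩

theorem omegaMin_pos {lam : ℂ} {m : ℕ} (hm : 1 ≤ m) (h : ∀ k, 1 ≤ k → k ≤ m → lam ^ k ≠ 1) :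
    0 < OmegaMin lam m := by
  set S := {x : ℝ | ∃ k : ℕ, 1 ≤ k ∧ k ≤ m ∧ x = ‖lam ^ k - 1‖}
  have hne : S.Nonempty := ⟨_, 1, le_rfl, hm, rfl⟩
  have hfin : S.Finite := ((Set.finite_Icc 1 m).image fun k => ‖lam ^ k - 1‖).subset
    (by rintro x ⟨k, hk, hkm, rfl⟩; exact ⟨k, ⟨hk, hkm⟩, rfl⟩)
  obtain ⟨k, hk, hkm, hmin⟩ := hne.csInf_mem hfin
  rw [OmegaMin, hmin]
  exact norm_pos_iff.2 (sub_ne_zero.2 (h k hk hkm))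

theorem sq_le_two_pow_factorial (q : ℕ) : q ^ 2 ≤ 2 ^ q ! := by
  have hq : q ≤ 2 ^ (q - 1) := by have := (q - 1).lt_two_pow_self; omega
  have hfac : 2 * (q - 1) ≤ q ! := by
    rcases Nat.lt_or_ge q 2 with h | h
    · omega
    · rw [← Nat.mul_factorial_pred (by omega)]
      exact Nat.mul_le_mul h (q - 1).self_le_factorial
  calc q ^ 2 ≤ (2 ^ (q - 1)) ^ 2 := by gcongr
    _ = 2 ^ (2 * (q - 1)) := by rw [← pow_mul, mul_comm]
    _ ≤ 2 ^ q ! := Nat.pow_le_pow_right two_pos hfac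

theorem irrational_of_unbounded_coprime_approx {θ : ℝ}
    (h : ∀ q₀ : ℕ, ∃ (p : ℤ) (q : ℕ), 1 ≤ q ∧ q₀ ≤ q ∧ Nat.Coprime p.natAbs q ∧
      |θ - p / q| < 1 / (q : ℝ) ^ 2) :
    Irrational θ := by
  refine (Real.infinite_rat_abs_sub_lt_one_div_den_sq_iff_irrational θ).1 <|
    Set.Infinite.of_image Rat.den <| Set.infinite_of_forall_exists_gt fun q₀ => ?_
  obtain ⟨p, q, hq, hq₀, hpq, happrox⟩ := h (q₀ + 1)
  have hden : (p / q : ℚ).den = q := by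
    exact_mod_cast Rat.den_div_eq_of_coprime (b := q) (by omega) hpq
  refine ⟨q, ⟨p / q, ?_, hden⟩, hq₀⟩
  simpa [hden] using happrox

theorem Irrational.exp_two_pi_I_mul_pow_ne_one {θ : ℝ} (hθ : Irrational θ) {k : ℕ} (hk : k ≠ 0) :
    Complex.exp (2 * π * Complex.I * θ) ^ k ≠ 1 := by
  rw [← Complex.exp_nat_mul, Ne, Complex.exp_eq_one_iff]
  rintro ⟨n, hn⟩
  have : ((k * θ : ℝ) : ℂ) = (n : ℝ) := by
    apply mul_right_cancel₀ Complex.two_pi_I_ne_zero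
    push_cast
    linear_combination hn
  exact (hθ.natCast_mul hk).ne_int n (by exact_mod_cast this)

theorem norm_exp_two_pi_I_mul_pow_sub_one_le (θ : ℝ) (p : ℤ) (q : ℕ) :
    ‖Complex.exp (2 * π * Complex.I * θ) ^ q - 1‖ ≤ 2 * π * q * |θ - p / q| := by
  rcases eq_or_ne q 0 with rfl | hq
  · simp
  have hrot : Complex.exp (2 * π * Complex.I * θ) ^ q =
      Complex.exp (Complex.I * (2 * π * (q * θ - p) : ℝ)) := by
    rw [← Complex.exp_nat_mul, ← mul_one (Complex.exp (Complex.I * _)),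
      ← Complex.exp_int_mul_two_pi_mul_I p, ← Complex.exp_add]
    push_cast
    ring_nf
  calc ‖Complex.exp (2 * π * Complex.I * θ) ^ q - 1‖ ≤ ‖2 * π * (q * θ - p)‖ := by
        rw [hrot]; exact Real.norm_exp_I_mul_ofReal_sub_one_le
    _ = 2 * π * q * |θ - p / q| := by
        rw [show 2 * π * (q * θ - p) = 2 * π * q * (θ - p / q) by field_simp, Real.norm_eq_abs,
          abs_mul, abs_of_pos (by positivity : 0 < 2 * π * q)]

theorem factorial_pred_mul_log_two_sub_le_neg_log {x c : ℝ} {q : ℕ} (hq : 1 ≤ q) (hx : 0 < x)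
    (hxc : x ≤ c * q / 2 ^ q !) : (q - 1)! * log 2 - c ≤ -(1 / q) * log x := by
  have hq' : (0 : ℝ) < q := by exact_mod_cast hq
  have hcq : 0 < c * q := (div_pos_iff_of_pos_right (by positivity)).1 (hx.trans_le hxc)
  have hlog : log x ≤ c * q - q ! * log 2 :=
    calc log x ≤ log (c * q / 2 ^ q !) := log_le_log hx hxc
      _ = log (c * q) - q ! * log 2 := by rw [log_div hcq.ne' (by positivity), log_pow]
      _ ≤ c * q - q ! * log 2 := by linarith [log_le_sub_one_of_pos hcq]
  have hfac : (q ! : ℝ) = q * (q - 1)! := by exact_mod_cast (Nat.mul_factorial_pred (by omega)).symm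
  rw [hfac] at hlog
  rw [neg_mul, one_div, ← div_eq_inv_mul, le_neg, div_le_iff₀ hq']
  linarith

/-- if `λ = e^{2πiθ}` lies in every `S(q₀)` (i.e. for every `q₀ ≥ 1` there
is a rational `p/q` in lowest terms with `q ≥ q₀` and `|θ − p/q| < 2^{−q!}`), then `λ`
satisfies Cremer's condition `limsup_m −(1/m) log Ω_λ(m) = +∞`, expressed as: for
every `C` one frequently has `−(1/m) log Ω_λ(m) > C`. -/
theorem cremer_condition_of_liouville (θ : ℝ) (lam : ℂ)
    (hlam : lam = Complex.exp (2 * Real.pi * Complex.I * θ))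
    (happrox : ∀ q₀ : ℕ, 1 ≤ q₀ → ∃ (p : ℤ) (q : ℕ), 1 ≤ q ∧ q₀ ≤ q ∧
      Nat.Coprime p.natAbs q ∧ |θ - (p : ℝ) / (q : ℝ)| < 1 / 2 ^ (Nat.factorial q)) :
    ∀ C : ℝ, ∃ᶠ m : ℕ in atTop, C < -(1 / (m : ℝ)) * Real.log (OmegaMin lam m) := by
  have hirr : Irrational θ := irrational_of_unbounded_coprime_approx fun q₀ => by
    obtain ⟨p, q, hq, hq₀, hpq, hθ⟩ := happrox (max q₀ 1) (le_max_right _ _)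
    refine ⟨p, q, hq, le_of_max_le_left hq₀, hpq, hθ.trans_le ?_⟩
    gcongr
    exact_mod_cast sq_le_two_pow_factorial q
  intro C
  have hfac : Tendsto (fun q : ℕ => ((q - 1)! : ℝ) * log 2) atTop atTop :=
    (tendsto_natCast_atTop_atTop.comp (factorial_tendsto_atTop.comp
      (tendsto_sub_atTop_nat 1))).atTop_mul_const (log_pos one_lt_two)
  have hgood : ∃ᶠ q : ℕ in atTop, 1 ≤ q ∧ ∃ p : ℤ, |θ - p / q| < 1 / 2 ^ q ! :=
    frequently_atTop.2 fun q₀ => by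
      obtain ⟨p, q, hq, hq₀, -, hθ⟩ := happrox (max q₀ 1) (le_max_right _ _)
      exact ⟨q, le_of_max_le_left hq₀, hq, p, hθ⟩
  refine (hgood.and_eventually (hfac.eventually_gt_atTop (C + 2 * π))).mono ?_
  rintro q ⟨⟨hq, p, hθ⟩, hC⟩
  have hΩ : OmegaMin lam q ≤ 2 * π * q / 2 ^ q ! :=
    calc OmegaMin lam q ≤ ‖lam ^ q - 1‖ := omegaMin_le_norm_pow_sub_one hq le_rfl
      _ ≤ 2 * π * q * |θ - p / q| := hlam ▸ norm_exp_two_pi_I_mul_pow_sub_one_le θ p q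
      _ ≤ 2 * π * q * (1 / 2 ^ q !) := by gcongr
      _ = 2 * π * q / 2 ^ q ! := mul_one_div _ _
  have hlower := factorial_pred_mul_log_two_sub_le_neg_log hq
    (omegaMin_pos hq fun k hk _ => hlam ▸ hirr.exp_two_pi_I_mul_pow_ne_one (by omega)) hΩ
  linarith
end

section
/- Fix λ ∈ S¹ not a root of unity. One can choose coefficients a_j ∈ {0,1} for j ≥ 2 inductively so that |a_j + X_j| ≥ 1/2 for all j ≥ 2, where h_j = (a_j + X_j)/(λ^j − λ) are the coefficients of the formal linearization of f(z) = λz + Σ a_j z^j and X_j is the universal polynomial in a₂,…,a_{j−1},h₂,…,h_{j−1} from the linearization recursion; consequently |h_j| ≥ 1/(2|λ^j − λ|) for all j ≥ 2. -/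
/-!
Comparing the coefficients of `zⁿ` in `h(λz) = f(h(z))` and splitting off the two trivial
compositions `(n)` and `(1, …, 1)` of `n` gives `(λⁿ - λ) hₙ = aₙ + Xₙ`, where `Xₙ` only
involves `aₖ, hₖ` with `k < n`. Hence `aₙ` and `hₙ` can be defined simultaneously by
recursion, choosing `aₙ = 0` if `|Xₙ| ≥ 1/2` and `aₙ = 1` otherwise; by strong induction every
formal linearization of the resulting `f` has these coefficients `hₙ`.
-/

open FormalMultilinearSeries

theorem coeff_comp_ofScalars {𝕜 : Type*} [NontriviallyNormedField 𝕜] (a h : ℕ → 𝕜) (n : ℕ) :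
    ((ofScalars 𝕜 a).comp (ofScalars 𝕜 h)).coeff n =
      ∑ c : Composition n, a c.length * ∏ i, h (c.blocksFun i) := by
  simp only [FormalMultilinearSeries.coeff, FormalMultilinearSeries.comp, sum_apply,
    compAlongComposition_apply]
  refine Finset.sum_congr rfl fun c _ => ?_
  simp [FormalMultilinearSeries.applyComposition, ofScalars, List.prod_ofFn, Function.comp_def]

section Remainder

variable {R : Type*} [CommSemiring R]

/-- The term `X_n` of the linearization recursion: the contribution to the `n`-th coefficient
of `f ∘ h` of all compositions of `n` other than the two trivial ones `(n)` and `(1, …, 1)`. -/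
noncomputable def linearizationRemainder (a h : ℕ → R) (n : ℕ) : R :=
  ∑ c : Composition n with 2 ≤ c.length ∧ c.length < n, a c.length * ∏ i, h (c.blocksFun i)

theorem linearizationRemainder_congr {a a' h h' : ℕ → R} {n : ℕ}
    (ha : ∀ k < n, a k = a' k) (hh : ∀ k < n, h k = h' k) :
    linearizationRemainder a h n = linearizationRemainder a' h' n := by
  refine Finset.sum_congr rfl fun c hc => ?_
  obtain ⟨hlen, hlen_lt⟩ := (Finset.mem_filter.mp hc).2
  have hn : 0 < n := by omega
  have hblocks : ∀ i, c.blocksFun i < n := by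
    refine (Composition.ne_single_iff hn).mp ?_
    rw [Ne, Composition.eq_single_iff_length hn]
    omega
  rw [ha _ hlen_lt]
  exact congrArg _ (Finset.prod_congr rfl fun i _ => hh _ (hblocks i))

theorem sum_compositions_eq_add_linearizationRemainder (a h : ℕ → R) {n : ℕ} (hn : 2 ≤ n)
    (h1 : h 1 = 1) :
    ∑ c : Composition n, a c.length * ∏ i, h (c.blocksFun i) =
      a 1 * h n + a n + linearizationRemainder a h n := by
  have hn0 : 0 < n := by omega
  have hsingle_ne_ones : Composition.single n hn0 ≠ Composition.ones n := by
    rw [Ne, Composition.eq_ones_iff_length, Composition.single_length]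
    omega
  have htrivial : (Finset.univ.filter fun c : Composition n => ¬(2 ≤ c.length ∧ c.length < n)) =
      {Composition.single n hn0, Composition.ones n} := by
    ext c
    simp only [Finset.mem_filter, Finset.mem_univ, true_and, Finset.mem_insert,
      Finset.mem_singleton, Composition.eq_single_iff_length hn0,
      Composition.eq_ones_iff_length]
    have := c.length_le
    have := c.length_pos_of_pos hn0
    omega
  have hsingle : ∏ i, h ((Composition.single n hn0).blocksFun i) = h n := by
    simp_rw [Composition.single_blocksFun hn0]
    rw [Finset.prod_const, Finset.card_univ, Fintype.card_fin, Composition.single_length, pow_one]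
  have hones : ∏ i, h ((Composition.ones n).blocksFun i) = 1 := by
    simp [Composition.ones_blocksFun, h1]
  rw [← Finset.sum_filter_not_add_sum_filter _
      fun c : Composition n => 2 ≤ c.length ∧ c.length < n, htrivial,
    Finset.sum_pair hsingle_ne_ones, hsingle, hones, Composition.single_length,
    Composition.ones_length, mul_one]
  rfl

end Remainder

theorem pow_sub_mul_eq_add_linearizationRemainder {𝕜 : Type*} [NontriviallyNormedField 𝕜]
    {lam : 𝕜} {a h : ℕ → 𝕜} (ha1 : a 1 = lam) (hh1 : h 1 = 1)
    (hlin : ∀ n, h n * lam ^ n = ((ofScalars 𝕜 a).comp (ofScalars 𝕜 h)).coeff n)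
    {n : ℕ} (hn : 2 ≤ n) :
    (lam ^ n - lam) * h n = a n + linearizationRemainder a h n := by
  have := hlin n
  rw [coeff_comp_ofScalars, sum_compositions_eq_add_linearizationRemainder a h hn hh1, ha1] at this
  linear_combination this

noncomputable def cremerChoice (x : ℂ) : ℂ := if 1 / 2 ≤ ‖x‖ then 0 else 1

theorem cremerChoice_eq_zero_or_eq_one (x : ℂ) : cremerChoice x = 0 ∨ cremerChoice x = 1 := by
  unfold cremerChoice
  split_ifs
  exacts [Or.inl rfl, Or.inr rfl]

theorem half_le_norm_cremerChoice_add (x : ℂ) : 1 / 2 ≤ ‖cremerChoice x + x‖ := by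
  unfold cremerChoice
  split_ifs with hx
  · simpa using hx
  · calc (1 : ℝ) / 2 ≤ ‖(1 : ℂ)‖ - ‖x‖ := by rw [norm_one]; linarith
      _ ≤ ‖1 + x‖ := by simpa using norm_sub_norm_le (1 : ℂ) (-x)

noncomputable def cremerSeq (lam : ℂ) : ℕ → ℂ × ℂ
  | 0 => (0, 0)
  | 1 => (lam, 1)
  | n + 2 =>
    let X := linearizationRemainder (fun k => if _ : k < n + 2 then (cremerSeq lam k).1 else 0)
      (fun k => if _ : k < n + 2 then (cremerSeq lam k).2 else 0) (n + 2)
    (cremerChoice X, (cremerChoice X + X) / (lam ^ (n + 2) - lam))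

noncomputable def cremerCoeff (lam : ℂ) (n : ℕ) : ℂ := (cremerSeq lam n).1

noncomputable def cremerLin (lam : ℂ) (n : ℕ) : ℂ := (cremerSeq lam n).2

section Cremer

variable (lam : ℂ) {j : ℕ}

@[simp] theorem cremerCoeff_zero : cremerCoeff lam 0 = 0 := by simp [cremerCoeff, cremerSeq]

@[simp] theorem cremerCoeff_one : cremerCoeff lam 1 = lam := by simp [cremerCoeff, cremerSeq]

@[simp] theorem cremerLin_zero : cremerLin lam 0 = 0 := by simp [cremerLin, cremerSeq]

@[simp] theorem cremerLin_one : cremerLin lam 1 = 1 := by simp [cremerLin, cremerSeq]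

theorem cremerSeq_add_two (n : ℕ) :
    cremerSeq lam (n + 2) =
      let X := linearizationRemainder (cremerCoeff lam) (cremerLin lam) (n + 2)
      (cremerChoice X, (cremerChoice X + X) / (lam ^ (n + 2) - lam)) := by
  rw [cremerSeq]
  have hX : linearizationRemainder (fun k => if _ : k < n + 2 then (cremerSeq lam k).1 else 0)
      (fun k => if _ : k < n + 2 then (cremerSeq lam k).2 else 0) (n + 2) =
      linearizationRemainder (cremerCoeff lam) (cremerLin lam) (n + 2) :=
    linearizationRemainder_congr (fun k hk => by simp [hk, cremerCoeff])
      (fun k hk => by simp [hk, cremerLin])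
  simp only [hX]

theorem cremerCoeff_of_two_le (hj : 2 ≤ j) :
    cremerCoeff lam j =
      cremerChoice (linearizationRemainder (cremerCoeff lam) (cremerLin lam) j) := by
  obtain ⟨n, rfl⟩ := Nat.exists_eq_add_of_le' hj
  rw [cremerCoeff, cremerSeq_add_two]

theorem cremerLin_of_two_le (hj : 2 ≤ j) :
    cremerLin lam j =
      (cremerCoeff lam j + linearizationRemainder (cremerCoeff lam) (cremerLin lam) j) /
        (lam ^ j - lam) := by
  obtain ⟨n, rfl⟩ := Nat.exists_eq_add_of_le' hj
  rw [cremerLin, cremerSeq_add_two, cremerCoeff_of_two_le lam hj]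

theorem half_le_norm_cremerCoeff_add (hj : 2 ≤ j) :
    1 / 2 ≤ ‖cremerCoeff lam j + linearizationRemainder (cremerCoeff lam) (cremerLin lam) j‖ := by
  rw [cremerCoeff_of_two_le lam hj]
  exact half_le_norm_cremerChoice_add _

theorem eq_cremerLin {h : ℕ → ℂ} (h0 : h 0 = 0) (h1 : h 1 = 1)
    (hrec : ∀ n, 2 ≤ n →
      (lam ^ n - lam) * h n = cremerCoeff lam n + linearizationRemainder (cremerCoeff lam) h n) :
    h = cremerLin lam := by
  funext n
  induction n using Nat.strong_induction_on with
  | _ n ih =>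
    match n, ih with
    | 0, _ => rw [h0, cremerLin_zero]
    | 1, _ => rw [h1, cremerLin_one]
    | n + 2, ih =>
      have hn : 2 ≤ n + 2 := by omega
      have hX : linearizationRemainder (cremerCoeff lam) h (n + 2) =
          linearizationRemainder (cremerCoeff lam) (cremerLin lam) (n + 2) :=
        linearizationRemainder_congr (fun _ _ => rfl) ih
      -- `aₙ + Xₙ` is kept away from `0`, so for `λⁿ = λ` the recursion has no solution at all.
      have hd : lam ^ (n + 2) - lam ≠ 0 := by
        intro hd
        have := half_le_norm_cremerCoeff_add lam hn
        rw [← hX, ← hrec _ hn, hd, zero_mul, norm_zero] at this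
        norm_num at this
      rw [cremerLin_of_two_le lam hn, eq_div_iff hd, ← hX, ← hrec _ hn, mul_comm]

end Cremer

theorem one_div_two_mul_le_of_half_le_mul {d x : ℝ} (hd : 0 ≤ d) (h : 1 / 2 ≤ d * x) :
    1 / (2 * d) ≤ x := by
  have hd : 0 < d := hd.lt_of_ne (by rintro rfl; norm_num at h)
  rw [div_le_iff₀ (by positivity)]
  linarith

theorem cremer_coefficient_choice_general (lam : ℂ) :
    ∃ a : ℕ → ℂ, a 0 = 0 ∧ a 1 = lam ∧
      (∀ j : ℕ, 2 ≤ j → a j = 0 ∨ a j = 1) ∧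
      ∀ h : ℕ → ℂ,
        (h 0 = 0 ∧ h 1 = 1 ∧
          ∀ n : ℕ, h n * lam ^ n =
            ((ofScalars ℂ a).comp (ofScalars ℂ h)).coeff n) →
        ∀ j : ℕ, 2 ≤ j →
          (1 : ℝ) / 2 ≤ ‖a j + ((lam ^ j - lam) * h j - a j)‖ ∧
          1 / (2 * ‖lam ^ j - lam‖) ≤ ‖h j‖ := by
  refine ⟨cremerCoeff lam, cremerCoeff_zero lam, cremerCoeff_one lam, fun j hj => ?_, ?_⟩
  · rw [cremerCoeff_of_two_le lam hj]
    exact cremerChoice_eq_zero_or_eq_one _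
  rintro h ⟨h0, h1, hlin⟩ j hj
  have hrec := fun n (hn : 2 ≤ n) =>
    pow_sub_mul_eq_add_linearizationRemainder (cremerCoeff_one lam) h1 hlin hn
  obtain rfl := eq_cremerLin lam h0 h1 hrec
  have hbound : 1 / 2 ≤ ‖(lam ^ j - lam) * cremerLin lam j‖ := by
    rw [hrec j hj]
    exact half_le_norm_cremerCoeff_add lam hj
  rw [add_sub_cancel]
  refine ⟨hbound, one_div_two_mul_le_of_half_le_mul (norm_nonneg _) ?_⟩
  rwa [← norm_mul]

/-- Cremer's construction. For `λ` of modulus one, not a root of unity,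
one can choose coefficients `a_j ∈ {0,1}` (`j ≥ 2`) such that, `h` being the formal
linearization of `f(z) = λ z + Σ_{j≥2} a_j z^j` (i.e. `h 0 = 0`, `h 1 = 1` and
`h(λz) = f(h(z))` as formal series), one has `|a_j + X_j| ≥ 1/2` for all `j ≥ 2` —
where `X_j = (λ^j − λ) h_j − a_j` is the quantity from the linearization recursion
`h_j = (a_j + X_j)/(λ^j − λ)` — and consequently `|h_j| ≥ 1/(2 |λ^j − λ|)`. -/
theorem cremer_coefficient_choice (lam : ℂ) (hlam : ‖lam‖ = 1)
    (hroot : ∀ n : ℕ, 0 < n → lam ^ n ≠ 1) :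
    ∃ a : ℕ → ℂ, a 0 = 0 ∧ a 1 = lam ∧
      (∀ j : ℕ, 2 ≤ j → a j = 0 ∨ a j = 1) ∧
      ∀ h : ℕ → ℂ,
        (h 0 = 0 ∧ h 1 = 1 ∧
          ∀ n : ℕ, h n * lam ^ n =
            ((ofScalars ℂ a).comp (ofScalars ℂ h)).coeff n) →
        ∀ j : ℕ, 2 ≤ j →
          (1 : ℝ) / 2 ≤ ‖a j + ((lam ^ j - lam) * h j - a j)‖ ∧
          1 / (2 * ‖lam ^ j - lam‖) ≤ ‖h j‖ :=
  cremer_coefficient_choice_general lam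
end

section
/- The set of λ ∈ S¹ satisfying the Siegel diophantine condition — there exist β ≥ 1 and γ > 0 with 1/Ω_λ(m) ≤ γ m^β for all m ≥ 2, where Ω_λ(m) = min_{1≤k≤m}|λ^k − 1| — has full Lebesgue (Haar) measure in S¹. -/
/-!
Off the rationals and the Liouville numbers, both Lebesgue-null, every `θ` is Diophantine:
`|kθ - a| ≥ C k⁻ⁿ` for all integers `k ≥ 1` and `a`. By Jordan's inequality
`|e^{2πix} - 1| = 2 |sin πx| ≥ 4 ‖x‖`, where `‖x‖` is the distance from `x` to `ℤ`, so for
`λ = e^{2πiθ}` every `|λᵏ - 1|` with `k ≤ m` is at least `4C m⁻ⁿ`.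
-/

open MeasureTheory

open Real in
theorem four_mul_abs_sub_round_le_norm_exp_sub_one (x : ℝ) :
    4 * |x - round x| ≤ ‖Complex.exp (2 * π * Complex.I * x) - 1‖ := by
  have hsin : |sin (π * x)| = |sin (π * (x - round x))| := by
    rw [show π * x = π * (x - round x) + round x * π by ring, sin_add_int_mul_pi, abs_mul,
      abs_neg_one_zpow, one_mul]
  have hπd : |π * (x - round x)| ≤ π / 2 := by
    rw [abs_mul, abs_of_pos pi_pos]
    nlinarith [abs_sub_round x, pi_pos]
  have hexp : 2 * π * Complex.I * x = Complex.I * ((2 * π * x : ℝ) : ℂ) := by push_cast; ring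
  calc 4 * |x - round x| = 2 * (2 / π * |π * (x - round x)|) := by
        rw [abs_mul, abs_of_pos pi_pos]; field_simp; ring
    _ ≤ 2 * |sin (π * (x - round x))| := by gcongr; exact mul_abs_le_abs_sin hπd
    _ = ‖Complex.exp (2 * π * Complex.I * x) - 1‖ := by
        rw [hexp, Complex.norm_exp_I_mul_ofReal_sub_one, norm_mul, Real.norm_two, norm_eq_abs,
          ← hsin]
        ring_nf

theorem Irrational.exists_pos_div_pow_le_abs_mul_sub_of_not_liouville {θ : ℝ}
    (hirr : Irrational θ) (hL : ¬Liouville θ) :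
    ∃ n : ℕ, ∃ C > 0, ∀ k : ℕ, 0 < k → ∀ a : ℤ, C / (k : ℝ) ^ n ≤ |k * θ - a| := by
  simp only [Liouville, not_forall, not_exists, not_and, not_lt] at hL
  obtain ⟨n, hn⟩ := hL
  have hround : 0 < |θ - round θ| := abs_pos.mpr (sub_ne_zero.mpr (hirr.ne_int _))
  refine ⟨n, min |θ - round θ| 1, lt_min hround one_pos, fun k hk a => ?_⟩
  -- `Liouville` only constrains denominators `b > 1`; for `k = 1` we use the nearest integer.
  rcases (Nat.one_le_of_lt hk).eq_or_lt with rfl | hk2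
  · simpa using (min_le_left _ _).trans (round_le θ a)
  · have hkR : (1 : ℝ) ≤ k := by exact_mod_cast hk
    have hne : θ ≠ a / (k : ℤ) := (irrational_iff_ne_rational θ).mp hirr a k (by omega)
    calc min |θ - round θ| 1 / (k : ℝ) ^ n ≤ 1 / (k : ℝ) ^ n := by gcongr; exact min_le_right _ _
      _ ≤ k * (1 / (k : ℝ) ^ n) := le_mul_of_one_le_left (by positivity) hkR
      _ ≤ k * |θ - a / k| := by
        gcongr; simpa using hn a k (by exact_mod_cast hk2) hne
      _ = |k * (θ - a / k)| := by rw [abs_mul, Nat.abs_cast]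
      _ = |k * θ - a| := by rw [mul_sub, mul_div_cancel₀ _ (by positivity)]

theorem one_div_omegaMin_le {lam : ℂ} {C : ℝ} {n m : ℕ} (hC : 0 < C) (hm : 1 ≤ m)
    (h : ∀ k : ℕ, 1 ≤ k → k ≤ m → C / (k : ℝ) ^ n ≤ ‖lam ^ k - 1‖) :
    1 / OmegaMin lam m ≤ C⁻¹ * (m : ℝ) ^ n := by
  have hlow : C / (m : ℝ) ^ n ≤ OmegaMin lam m := by
    refine le_csInf ⟨_, 1, le_rfl, hm, rfl⟩ ?_
    rintro _ ⟨k, hk1, hkm, rfl⟩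
    calc C / (m : ℝ) ^ n ≤ C / (k : ℝ) ^ n := by gcongr
      _ ≤ ‖lam ^ k - 1‖ := h k hk1 hkm
  have hpos : 0 < C / (m : ℝ) ^ n := by
    have : (0 : ℝ) < m := by exact_mod_cast hm
    positivity
  calc 1 / OmegaMin lam m ≤ 1 / (C / (m : ℝ) ^ n) := one_div_le_one_div_of_le hpos hlow
    _ = C⁻¹ * (m : ℝ) ^ n := by rw [one_div_div, div_eq_inv_mul]

theorem siegel_condition_of_irrational_of_not_liouville {θ : ℝ} (hirr : Irrational θ)
    (hL : ¬Liouville θ) :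
    ∃ β : ℝ, 1 ≤ β ∧ ∃ γ : ℝ, 0 < γ ∧ ∀ m : ℕ, 2 ≤ m →
      1 / OmegaMin (Complex.exp (2 * Real.pi * Complex.I * θ)) m ≤ γ * (m : ℝ) ^ β := by
  obtain ⟨n, C, hC, hdio⟩ := hirr.exists_pos_div_pow_le_abs_mul_sub_of_not_liouville hL
  set lam := Complex.exp (2 * Real.pi * Complex.I * θ)
  have hgap : ∀ k : ℕ, 1 ≤ k → 4 * C / (k : ℝ) ^ n ≤ ‖lam ^ k - 1‖ := by
    intro k hk
    rw [← Complex.exp_nat_mul, show (k : ℂ) * (2 * Real.pi * Complex.I * θ)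
      = 2 * Real.pi * Complex.I * ((k * θ : ℝ) : ℂ) by push_cast; ring]
    calc 4 * C / (k : ℝ) ^ n = 4 * (C / (k : ℝ) ^ n) := by ring
      _ ≤ 4 * |k * θ - round (k * θ)| := by gcongr; exact hdio k hk _
      _ ≤ _ := four_mul_abs_sub_round_le_norm_exp_sub_one _
  refine ⟨((n + 1 : ℕ) : ℝ), by simp, (4 * C)⁻¹, by positivity, fun m hm => ?_⟩
  have hm1 : (1 : ℝ) ≤ m := by exact_mod_cast one_le_two.trans hm
  calc 1 / OmegaMin lam m ≤ (4 * C)⁻¹ * (m : ℝ) ^ n :=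
        one_div_omegaMin_le (by positivity) (one_le_two.trans hm) fun k hk _ => hgap k hk
    _ ≤ (4 * C)⁻¹ * (m : ℝ) ^ ((n + 1 : ℕ) : ℝ) := by
        rw [Real.rpow_natCast]; gcongr; exact n.le_succ

/-- the set of `λ ∈ S¹` satisfying Siegel's diophantine condition
(`∃ β ≥ 1, γ > 0` with `1/Ω_λ(m) ≤ γ m^β` for all `m ≥ 2`) has full Lebesgue measure
in `S¹`, i.e. parametrizing `λ = e^{2πiθ}` by `θ ∈ [0,1]`, the set of parameters
failing the condition is Lebesgue-null. -/
theorem siegel_condition_full_measure :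
    volume {θ : ℝ | θ ∈ Set.Icc (0 : ℝ) 1 ∧
      ¬ ∃ β : ℝ, 1 ≤ β ∧ ∃ γ : ℝ, 0 < γ ∧
        ∀ m : ℕ, 2 ≤ m →
          1 / OmegaMin (Complex.exp (2 * Real.pi * Complex.I * θ)) m
            ≤ γ * (m : ℝ) ^ β} = 0 := by
  have hae : ∀ᵐ θ : ℝ, Irrational θ ∧ ¬Liouville θ :=
    ((Set.countable_range ((↑) : ℚ → ℝ)).ae_notMem volume).and ae_not_liouville
  refine measure_eq_zero_iff_ae_notMem.2 (hae.mono fun θ hgood hθ => hθ.2 ?_)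
  exact siegel_condition_of_irrational_of_not_liouville hgood.1 hgood.2
end
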